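/- arXiv:2410.01249 — 7 statements merged into one kernel-verified Lean document; each statement's English description precedes it below -/
import Mathlib

section
/- For any probability distributions p, q on a finite set A with p absolutely continuous with respect to q, the expected absolute log-ratio satisfies ∑_a p_a |log(p_a/q_a)| ≤ D_KL(p‖q) + √(2 D_KL(p‖q)). -/
open Real Set

noncomputable def klH (x : ℝ) : ℝ := x * Real.log x - x + 1 - 3*(x-1)^2/(2*(x+2))
noncomputable def klH' (x : ℝ) : ℝ := Real.log x - 3*(x-1)*(x+5)/(2*(x+2)^2)

lemma hasDerivAt_klH {x : ℝ} (hx : 0 < x) : HasDerivAt klH (klH' x) x := by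
  have hne : (2:ℝ)*(x+2) ≠ 0 := by positivity
  have h1 : HasDerivAt (fun x : ℝ => x * Real.log x) (Real.log x + 1) x := by
    have := (hasDerivAt_id x).fun_mul (Real.hasDerivAt_log hx.ne')
    refine this.congr_deriv ?_
    field_simp
    simp only [id]
    ring
  have h2 : HasDerivAt (fun x : ℝ => 3*(x-1)^2/(2*(x+2)))
      ((3*(2*(x-1)) * (2*(x+2)) - 3*(x-1)^2 * 2) / (2*(x+2))^2) x := by
    have hn : HasDerivAt (fun x : ℝ => 3*(x-1)^2) (3*(2*(x-1))) x := by
      have : HasDerivAt (fun x : ℝ => (x-1)^2) (2*(x-1)) x := by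
        simpa using ((hasDerivAt_id x).sub_const 1).fun_pow 2
      simpa [mul_comm] using this.const_mul 3
    have hd : HasDerivAt (fun x : ℝ => 2*(x+2)) 2 x := by
      simpa using ((hasDerivAt_id x).add_const 2).const_mul 2
    simpa using hn.fun_div hd hne
  have := (h1.fun_sub (hasDerivAt_id x)).add_const 1 |>.fun_sub h2
  refine this.congr_deriv ?_
  unfold klH'
  field_simp
  ring

lemma hasDerivAt_klH' {x : ℝ} (hx : 0 < x) : HasDerivAt klH' (1/x - 27/(x+2)^3) x := by
  have hne : (2:ℝ)*(x+2)^2 ≠ 0 := by positivity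
  have h1 : HasDerivAt Real.log (1/x) x := by simpa [one_div] using Real.hasDerivAt_log hx.ne'
  have h2 : HasDerivAt (fun x : ℝ => 3*(x-1)*(x+5)/(2*(x+2)^2))
      (((3*(x-1) + 3*(x+5)) * (2*(x+2)^2) - 3*(x-1)*(x+5) * (2*(2*(x+2)))) / (2*(x+2)^2)^2) x := by
    have hn : HasDerivAt (fun x : ℝ => 3*(x-1)*(x+5)) (3*(x-1) + 3*(x+5)) x := by
      have ha : HasDerivAt (fun x : ℝ => 3*(x-1)) 3 x := by
        simpa using ((hasDerivAt_id x).sub_const 1).const_mul 3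
      have hb : HasDerivAt (fun x : ℝ => x+5) 1 x := (hasDerivAt_id x).add_const 5
      have := ha.fun_mul hb
      refine this.congr_deriv ?_; ring
    have hd : HasDerivAt (fun x : ℝ => 2*(x+2)^2) (2*(2*(x+2))) x := by
      have : HasDerivAt (fun x : ℝ => (x+2)^2) (2*(x+2)) x := by
        simpa using ((hasDerivAt_id x).add_const 2).fun_pow 2
      simpa using this.const_mul 2
    simpa using hn.fun_div hd hne
  have := h1.fun_sub h2
  refine this.congr_deriv ?_
  have hx2 : (x+2) ≠ 0 := by positivity
  field_simp
  ring
lemma klH'_mono : MonotoneOn klH' (Ioi (0:ℝ)) := by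
  apply monotoneOn_of_deriv_nonneg (convex_Ioi 0)
  · exact fun x hx => (hasDerivAt_klH' hx).continuousAt.continuousWithinAt
  · intro x hx
    rw [interior_Ioi] at hx
    exact (hasDerivAt_klH' hx).differentiableAt.differentiableWithinAt
  · intro x hx
    rw [interior_Ioi] at hx
    rw [(hasDerivAt_klH' hx).deriv]
    rw [Set.mem_Ioi] at hx
    rw [sub_nonneg, div_le_div_iff₀ (by positivity) hx]
    nlinarith [mul_nonneg (sq_nonneg (x-1)) (by linarith : (0:ℝ) ≤ x+8)]

lemma klH'_one : klH' 1 = 0 := by simp [klH']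

lemma klH_one : klH 1 = 0 := by norm_num [klH]

lemma klH_nonneg {x : ℝ} (hx : 0 < x) : 0 ≤ klH x := by
  rcases le_total x 1 with h | h
  · have anti : AntitoneOn klH (Ioc (0:ℝ) 1) := by
      apply antitoneOn_of_deriv_nonpos (convex_Ioc 0 1)
      · exact fun y hy => (hasDerivAt_klH hy.1).continuousAt.continuousWithinAt
      · intro y hy
        have hy' : y ∈ Ioo (0:ℝ) 1 := by simpa [interior_Ioc] using hy
        exact (hasDerivAt_klH hy'.1).differentiableAt.differentiableWithinAt
      · intro y hy
        have hy' : y ∈ Ioo (0:ℝ) 1 := by simpa [interior_Ioc] using hy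
        rw [(hasDerivAt_klH hy'.1).deriv]
        have := klH'_mono (Set.mem_Ioi.2 hy'.1) (Set.mem_Ioi.2 one_pos) hy'.2.le
        rw [klH'_one] at this
        exact this
    have := anti ⟨hx, h⟩ ⟨one_pos, le_refl 1⟩ h
    rwa [klH_one] at this
  · have mono : MonotoneOn klH (Ici (1:ℝ)) := by
      apply monotoneOn_of_deriv_nonneg (convex_Ici 1)
      · exact fun y hy => (hasDerivAt_klH (lt_of_lt_of_le one_pos hy)).continuousAt.continuousWithinAt
      · intro y hy
        have hy' : (1:ℝ) < y := by simpa [interior_Ici] using hy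
        exact (hasDerivAt_klH (lt_trans one_pos hy')).differentiableAt.differentiableWithinAt
      · intro y hy
        have hy' : (1:ℝ) < y := by simpa [interior_Ici] using hy
        rw [(hasDerivAt_klH (lt_trans one_pos hy')).deriv]
        have := klH'_mono (Set.mem_Ioi.2 one_pos) (Set.mem_Ioi.2 (lt_trans one_pos hy')) hy'.le
        rw [klH'_one] at this
        exact this
    have := mono (Set.mem_Ici.2 le_rfl) (Set.mem_Ici.2 h) h
    rwa [klH_one] at this

lemma kl_pointwise (p q : ℝ) (hp : 0 ≤ p) (hq : 0 ≤ q) (h0 : q = 0 → p = 0) :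
    3*(p-q)^2/(2*(p+2*q)) ≤ p * Real.log (p/q) - p + q := by
  rcases eq_or_lt_of_le hq with hq0 | hq0
  · have hp0 : p = 0 := h0 hq0.symm
    simp [hp0, ← hq0]
  rcases eq_or_lt_of_le hp with hp0 | hp0
  · have : 3*(p-q)^2/(2*(p+2*q)) = 3*q/4 := by
      rw [← hp0]; field_simp; ring
    rw [this, ← hp0]
    simp only [zero_mul, zero_sub, neg_add_cancel, zero_add]
    linarith
  · have hh := klH_nonneg (div_pos hp0 hq0)
    have hqne : q ≠ 0 := hq0.ne'
    have h2 : p/q + 2 ≠ 0 := by positivity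
    have h3 : p + 2*q ≠ 0 := by positivity
    have key : q * klH (p/q) = (p * Real.log (p/q) - p + q) - 3*(p-q)^2/(2*(p+2*q)) := by
      unfold klH
      field_simp
    nlinarith [mul_nonneg hq hh]

lemma absdiff_pointwise (p q : ℝ) (hp : 0 ≤ p) (hq : 0 ≤ q) (h0 : q = 0 → p = 0) :
    p * |Real.log (p/q)| - p * Real.log (p/q) ≤ (q - p) + |q - p| := by
  rcases eq_or_lt_of_le hp with hp0 | hp0
  · rw [← hp0]
    simp only [zero_mul, sub_zero, sub_self, zero_sub]
    positivity
  have hq0 : 0 < q := by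
    rcases eq_or_lt_of_le hq with h | h
    · exact absurd (h0 h.symm) hp0.ne'
    · exact h
  rcases le_or_gt 0 (Real.log (p/q)) with hL | hL
  · rw [abs_of_nonneg hL]
    have := neg_abs_le (q - p)
    linarith [abs_nonneg (q-p)]
  · rw [abs_of_neg hL]
    have hplt : p < q := by
      have h1 : p / q < 1 := (Real.log_neg_iff (by positivity)).mp hL
      rwa [div_lt_one hq0] at h1
    rw [abs_of_nonneg (by linarith : (0:ℝ) ≤ q - p)]
    have hlog : Real.log (q/p) ≤ q/p - 1 := Real.log_le_sub_one_of_pos (by positivity)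
    have hinv : Real.log (q/p) = - Real.log (p/q) := by
      rw [Real.log_div hq0.ne' hp0.ne', Real.log_div hp0.ne' hq0.ne']; ring
    rw [hinv] at hlog
    have := mul_le_mul_of_nonneg_left hlog hp
    rw [mul_sub, mul_div_cancel₀ _ hp0.ne', mul_one] at this
    nlinarith

/-- For probability distributions `p, q` on a finite set `A` with `p`
absolutely continuous w.r.t. `q`, the expected absolute log-ratio satisfies
`∑ a, p a * |log (p a / q a)| ≤ D_KL(p‖q) + √(2 D_KL(p‖q))`. -/
theorem abs_log_ratio_le_kl_add_sqrt {A : Type*} [Fintype A] (p q : A → ℝ)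
    (hp0 : ∀ a, 0 ≤ p a) (hp1 : ∑ a, p a = 1)
    (hq0 : ∀ a, 0 ≤ q a) (hq1 : ∑ a, q a = 1)
    (hac : ∀ a, q a = 0 → p a = 0) :
    ∑ a, p a * |Real.log (p a / q a)| ≤
      (∑ a, p a * Real.log (p a / q a)) +
        Real.sqrt (2 * ∑ a, p a * Real.log (p a / q a)) := by
  set K := ∑ a, p a * Real.log (p a / q a) with hK
  -- Step A: ∑ 3(p-q)²/(2(p+2q)) ≤ K
  have stepA : ∑ a, 3*(p a - q a)^2/(2*(p a + 2*q a)) ≤ K := by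
    calc ∑ a, 3*(p a - q a)^2/(2*(p a + 2*q a))
        ≤ ∑ a, (p a * Real.log (p a / q a) - p a + q a) :=
          Finset.sum_le_sum fun a _ => kl_pointwise (p a) (q a) (hp0 a) (hq0 a) (hac a)
      _ = K := by rw [Finset.sum_add_distrib, Finset.sum_sub_distrib, hp1, hq1]; ring
  -- Cauchy–Schwarz
  have hCS : (∑ a, |p a - q a|)^2 ≤ 2 * K := by
    set f : A → ℝ := fun a => |p a - q a| / Real.sqrt (2*(p a + 2*q a)) with hf
    set g : A → ℝ := fun a => Real.sqrt (2*(p a + 2*q a)) with hg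
    have hfg : ∀ a, f a * g a = |p a - q a| := by
      intro a
      rcases eq_or_lt_of_le (by linarith [hp0 a, hq0 a] : (0:ℝ) ≤ 2*(p a + 2*q a)) with h | h
      · have hp' : p a = 0 := by nlinarith [hp0 a, hq0 a]
        have hq' : q a = 0 := by nlinarith [hp0 a, hq0 a]
        simp [hf, hg, hp', hq']
      · simp only [hf, hg]
        rw [div_mul_cancel₀]
        exact (Real.sqrt_pos.mpr h).ne'
    have hf2 : ∀ a, f a ^ 2 = (p a - q a)^2/(2*(p a + 2*q a)) := by
      intro a
      simp only [hf]
      rw [div_pow, sq_abs, Real.sq_sqrt (by linarith [hp0 a, hq0 a])]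
    have hg2 : ∑ a, g a ^ 2 = 6 := by
      have : ∀ a, g a ^ 2 = 2*(p a + 2*q a) := fun a => Real.sq_sqrt (by linarith [hp0 a, hq0 a])
      simp only [this, Finset.sum_add_distrib, ← Finset.mul_sum, hp1, hq1]
      norm_num
    have h1 := Finset.sum_mul_sq_le_sq_mul_sq Finset.univ f g
    simp only [hfg] at h1
    rw [hg2] at h1
    have h2 : ∑ a, f a ^ 2 ≤ K / 3 := by
      have e : ∀ a, 3 * f a ^ 2 = 3*(p a - q a)^2/(2*(p a + 2*q a)) := by
        intro a; rw [hf2, mul_div_assoc]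
      have : ∑ a, 3 * f a ^ 2 ≤ K := by
        simp only [e]; exact stepA
      rw [← Finset.mul_sum] at this
      linarith
    nlinarith
  have hV : ∑ a, |p a - q a| ≤ Real.sqrt (2 * K) := by
    have h0 : 0 ≤ ∑ a, |p a - q a| := Finset.sum_nonneg fun a _ => abs_nonneg _
    calc ∑ a, |p a - q a| = Real.sqrt ((∑ a, |p a - q a|)^2) := (Real.sqrt_sq h0).symm
      _ ≤ Real.sqrt (2 * K) := Real.sqrt_le_sqrt hCS
  -- Step B
  have stepB : ∑ a, (p a * |Real.log (p a / q a)| - p a * Real.log (p a / q a))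
      ≤ ∑ a, |p a - q a| := by
    calc ∑ a, (p a * |Real.log (p a / q a)| - p a * Real.log (p a / q a))
        ≤ ∑ a, ((q a - p a) + |q a - p a|) :=
          Finset.sum_le_sum fun a _ => absdiff_pointwise (p a) (q a) (hp0 a) (hq0 a) (hac a)
      _ = ∑ a, |p a - q a| := by
          rw [Finset.sum_add_distrib, Finset.sum_sub_distrib, hp1, hq1]
          simp [abs_sub_comm]
  rw [Finset.sum_sub_distrib] at stepB
  linarith
end

section
/- Let v, c, u be probability distributions on a finite set A, with v, c having full support, and suppose there exists M ≥ 0 with u_a ≤ M v_a for all a. Then ⟨log(v/c), v − u⟩ ≤ (1 + M)(D_KL(v‖c) + √(2 D_KL(v‖c))). -/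
/-- Gibbs pointwise inequality: `x - y ≤ x * log (x / y)` for `x, y > 0`. -/
lemma gibbs_pt (x y : ℝ) (hx : 0 < x) (hy : 0 < y) :
    x - y ≤ x * Real.log (x / y) := by
  have h := Real.log_le_sub_one_of_pos (div_pos hy hx)
  have h2 : x * Real.log (y / x) ≤ x * (y / x - 1) :=
    mul_le_mul_of_nonneg_left h hx.le
  have h3 : Real.log (y / x) = - Real.log (x / y) := by
    rw [← Real.log_inv, inv_div]
  have h4 : x * (y / x - 1) = y - x := by field_simp
  nlinarith [h2, h3.symm ▸ h2]

/-- Hellinger pointwise inequality. -/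
lemma hellinger_pt (x y : ℝ) (hx : 0 < x) (hy : 0 < y) :
    (x - y) + (Real.sqrt x - Real.sqrt y) ^ 2 ≤ x * Real.log (x / y) := by
  have hxy : 0 < Real.sqrt (x * y) := Real.sqrt_pos.mpr (mul_pos hx hy)
  have h1 : x - Real.sqrt (x * y) ≤ x * Real.log (x / Real.sqrt (x * y)) :=
    gibbs_pt x _ hx hxy
  have h2 : Real.log (x / Real.sqrt (x * y)) = (1 / 2) * Real.log (x / y) := by
    have hs : Real.sqrt (x * y) ^ 2 = x * y := Real.sq_sqrt (mul_pos hx hy).le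
    have : (x / Real.sqrt (x * y)) ^ 2 = x / y := by
      rw [div_pow, hs]
      field_simp
    calc Real.log (x / Real.sqrt (x * y))
        = (1 / 2) * Real.log ((x / Real.sqrt (x * y)) ^ 2) := by
          rw [Real.log_pow]; push_cast; ring
      _ = (1 / 2) * Real.log (x / y) := by rw [this]
  have hsq : (Real.sqrt x - Real.sqrt y) ^ 2 = x + y - 2 * Real.sqrt (x * y) := by
    have := Real.sq_sqrt hx.le
    have := Real.sq_sqrt hy.le
    have := Real.sqrt_mul hx.le y
    nlinarith
  nlinarith [h1, h2 ▸ h1]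

/-- For probability distributions `v, c, u` on a finite set `A`, with
`v, c` fully supported and `u a ≤ M * v a` for all `a` (`M ≥ 0`),
`⟨log (v/c), v - u⟩ ≤ (1 + M) (D_KL(v‖c) + √(2 D_KL(v‖c)))`. -/
theorem inner_log_ratio_le {A : Type*} [Fintype A] (v c u : A → ℝ)
    (hv0 : ∀ a, 0 < v a) (hv1 : ∑ a, v a = 1)
    (hc0 : ∀ a, 0 < c a) (hc1 : ∑ a, c a = 1)
    (hu0 : ∀ a, 0 ≤ u a) (hu1 : ∑ a, u a = 1)
    (M : ℝ) (hM : 0 ≤ M) (hMu : ∀ a, u a ≤ M * v a) :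
    ∑ a, Real.log (v a / c a) * (v a - u a) ≤
      (1 + M) * ((∑ a, v a * Real.log (v a / c a)) +
        Real.sqrt (2 * ∑ a, v a * Real.log (v a / c a))) := by
  set D := ∑ a, v a * Real.log (v a / c a) with hD
  -- D ≥ 0
  have hD0 : 0 ≤ D := by
    have h : ∑ a, (v a - c a) ≤ D :=
      Finset.sum_le_sum fun a _ => gibbs_pt (v a) (c a) (hv0 a) (hc0 a)
    rwa [Finset.sum_sub_distrib, hv1, hc1, sub_self] at h
  -- Hellinger bound
  have hHell : ∑ a, (Real.sqrt (v a) - Real.sqrt (c a)) ^ 2 ≤ D := by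
    have h : ∑ a, ((v a - c a) + (Real.sqrt (v a) - Real.sqrt (c a)) ^ 2) ≤ D :=
      Finset.sum_le_sum fun a _ => hellinger_pt (v a) (c a) (hv0 a) (hc0 a)
    rw [Finset.sum_add_distrib, Finset.sum_sub_distrib, hv1, hc1, sub_self, zero_add] at h
    exact h
  -- L1 bound via Cauchy-Schwarz
  have hL1 : ∑ a, |v a - c a| ≤ 2 * Real.sqrt D := by
    have hcs := Finset.sum_mul_sq_le_sq_mul_sq Finset.univ
      (fun a => Real.sqrt (v a) + Real.sqrt (c a))
      (fun a => |Real.sqrt (v a) - Real.sqrt (c a)|)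
    have hprod : ∀ a : A, (Real.sqrt (v a) + Real.sqrt (c a)) *
        |Real.sqrt (v a) - Real.sqrt (c a)| = |v a - c a| := by
      intro a
      have h1 : 0 ≤ Real.sqrt (v a) + Real.sqrt (c a) := by positivity
      rw [← abs_of_nonneg h1, ← abs_mul]
      congr 1
      have := Real.sq_sqrt (hv0 a).le
      have := Real.sq_sqrt (hc0 a).le
      nlinarith
    have hsum1 : ∑ a, (Real.sqrt (v a) + Real.sqrt (c a)) ^ 2 ≤ 4 := by
      have h : ∀ a : A, (Real.sqrt (v a) + Real.sqrt (c a)) ^ 2 ≤ 2 * v a + 2 * c a := by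
        intro a
        have h1 := Real.sq_sqrt (hv0 a).le
        have h2 := Real.sq_sqrt (hc0 a).le
        nlinarith [sq_nonneg (Real.sqrt (v a) - Real.sqrt (c a))]
      calc ∑ a, (Real.sqrt (v a) + Real.sqrt (c a)) ^ 2
          ≤ ∑ a, (2 * v a + 2 * c a) := Finset.sum_le_sum fun a _ => h a
        _ = 4 := by
            rw [Finset.sum_add_distrib, ← Finset.mul_sum, ← Finset.mul_sum, hv1, hc1]; norm_num
    have hsum2 : ∑ a, |Real.sqrt (v a) - Real.sqrt (c a)| ^ 2 ≤ D := by
      simpa [sq_abs] using hHell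
    have habs0 : 0 ≤ ∑ a, |v a - c a| := Finset.sum_nonneg fun a _ => abs_nonneg _
    have hkey : (∑ a, |v a - c a|) ^ 2 ≤ 4 * D := by
      calc (∑ a, |v a - c a|) ^ 2
          = (∑ a, (Real.sqrt (v a) + Real.sqrt (c a)) *
              |Real.sqrt (v a) - Real.sqrt (c a)|) ^ 2 := by
            congr 1; exact Finset.sum_congr rfl fun a _ => (hprod a).symm
        _ ≤ (∑ a, (Real.sqrt (v a) + Real.sqrt (c a)) ^ 2) *
              ∑ a, |Real.sqrt (v a) - Real.sqrt (c a)| ^ 2 := hcs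
        _ ≤ 4 * D := by
            apply mul_le_mul hsum1 hsum2 (Finset.sum_nonneg fun a _ => sq_nonneg _)
            norm_num
    have h4D : (2 * Real.sqrt D) ^ 2 = 4 * D := by
      rw [mul_pow, Real.sq_sqrt hD0]; ring
    nlinarith [Real.sqrt_nonneg D, hkey, h4D]
  -- bound on the u-part
  have hUpt : ∀ a : A, -(Real.log (v a / c a) * u a) ≤
      M * (|v a - c a| / 2) + M * ((c a - v a) / 2) := by
    intro a
    have hlog : Real.log (c a / v a) ≤ c a / v a - 1 :=
      Real.log_le_sub_one_of_pos (div_pos (hc0 a) (hv0 a))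
    have hneg : -(Real.log (v a / c a)) = Real.log (c a / v a) := by
      rw [← Real.log_inv, inv_div]
    have h1 : -(Real.log (v a / c a) * u a) = u a * Real.log (c a / v a) := by
      rw [← hneg]; ring
    rw [h1]
    have h2 : u a * Real.log (c a / v a) ≤ u a * (c a / v a - 1) :=
      mul_le_mul_of_nonneg_left hlog (hu0 a)
    have hvne : v a ≠ 0 := (hv0 a).ne'
    have h3 : u a * (c a / v a - 1) = (u a / v a) * (c a - v a) := by
      field_simp
    have hv := hv0 a
    have huv : u a / v a ≤ M := (div_le_iff₀ hv).mpr (by linarith [hMu a])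
    have huv0 : 0 ≤ u a / v a := div_nonneg (hu0 a) hv.le
    have h4 : (u a / v a) * (c a - v a) ≤ M * (|v a - c a| / 2) + M * ((c a - v a) / 2) := by
      rcases le_or_gt (v a) (c a) with h | h
      · have habs : |v a - c a| = c a - v a := by rw [abs_sub_comm]; exact abs_of_nonneg (by linarith)
        rw [habs]
        nlinarith
      · have habs : |v a - c a| = v a - c a := abs_of_nonneg (by linarith)
        rw [habs]
        nlinarith
    linarith [h2, h3 ▸ h2, h4]
  have hU : ∑ a, -(Real.log (v a / c a) * u a) ≤ M * Real.sqrt D := by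
    have h1 : ∑ a, -(Real.log (v a / c a) * u a) ≤
        ∑ a, (M * (|v a - c a| / 2) + M * ((c a - v a) / 2)) :=
      Finset.sum_le_sum fun a _ => hUpt a
    have h2 : ∑ a, (M * (|v a - c a| / 2) + M * ((c a - v a) / 2)) =
        M / 2 * ∑ a, |v a - c a| + M / 2 * ∑ a, (c a - v a) := by
      rw [Finset.sum_add_distrib, Finset.mul_sum, Finset.mul_sum]
      congr 1 <;> exact Finset.sum_congr rfl fun a _ => by ring
    have h2b : ∑ a, (c a - v a) = 0 := by
      rw [Finset.sum_sub_distrib, hv1, hc1, sub_self]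
    rw [h2, h2b, mul_zero, add_zero] at h1
    calc ∑ a, -(Real.log (v a / c a) * u a)
        ≤ M / 2 * ∑ a, |v a - c a| := h1
      _ ≤ M / 2 * (2 * Real.sqrt D) := by
          apply mul_le_mul_of_nonneg_left hL1 (by linarith)
      _ = M * Real.sqrt D := by ring
  -- assemble
  have hsplit : ∑ a, Real.log (v a / c a) * (v a - u a) =
      D + ∑ a, -(Real.log (v a / c a) * u a) := by
    rw [hD, ← Finset.sum_add_distrib]
    exact Finset.sum_congr rfl fun a _ => by ring
  have hs : Real.sqrt D ≤ Real.sqrt (2 * D) := Real.sqrt_le_sqrt (by linarith)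
  have hs0 : 0 ≤ Real.sqrt (2 * D) := Real.sqrt_nonneg _
  rw [hsplit]
  nlinarith [hU, mul_le_mul_of_nonneg_left hs hM, mul_nonneg hM hD0]
end

section
/- Let Φ be the negative entropy restricted to the simplex Δ(A) over a finite action set A (Φ(x) = ∑_a x_a log x_a − x_a on Δ, +∞ off Δ), so D_Φ(p, q) = D_KL(p‖q) for p, q ∈ Δ with q fully supported. Let v, c, u ∈ Δ(A) with v, c fully supported and ‖u/v‖_∞ finite. Then D_Φ(u, v) + D_Φ(v, c) − D_Φ(u, c) ≤ (1 + ‖u/v‖_∞)(D_Φ(v, c) + √(2 D_Φ(v, c))). -/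
/-!
With `D = ∑ v log (v / c)`, the left side equals `D + ∑ u log (c / v)`, and since `u ≤ M v`
pointwise the cross term is at most `M ∑ v (log (c / v))⁺`. For `t > 0`,
`(log t)⁺ ≤ √(2 (t - 1 - log t))` (from `eˣ ≥ 1 + x + x² / 2`), and the `v`-average of the gaps
`c / v - 1 - log (c / v)` is exactly `D` because `∑ c = ∑ v`; concavity of `√` then bounds the
cross term by `M √(2D)`.
-/

open Finset Real

theorem posPart_log_le_sqrt_two_mul_sub_one_sub_log {t : ℝ} (ht : 0 < t) :
    (log t)⁺ ≤ √(2 * (t - 1 - log t)) := by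
  rcases le_total (log t) 0 with h | h
  · rw [posPart_eq_zero.2 h]
    exact sqrt_nonneg _
  · rw [posPart_eq_self.2 h, le_sqrt h (by linarith [log_le_sub_one_of_pos ht])]
    linarith [exp_log ht ▸ quadratic_le_exp_of_nonneg h]

theorem sum_mul_sqrt_le_sqrt_sum_mul {ι : Type*} (s : Finset ι) {w f : ι → ℝ}
    (hw : ∀ i ∈ s, 0 ≤ w i) (hw1 : ∑ i ∈ s, w i = 1) (hf : ∀ i ∈ s, 0 ≤ f i) :
    ∑ i ∈ s, w i * √(f i) ≤ √(∑ i ∈ s, w i * f i) :=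
  strictConcaveOn_sqrt.concaveOn.le_map_sum hw hw1 hf

theorem mul_log_div_sub_mul_log_div (x : ℝ) {y z : ℝ} (hy : y ≠ 0) (hz : z ≠ 0) :
    x * log (x / y) - x * log (x / z) = x * log (z / y) := by
  rcases eq_or_ne x 0 with rfl | hx
  · simp
  · rw [log_div hx hy, log_div hx hz, log_div hz hy]
    ring

section Simplex

variable {A : Type*} [Fintype A] {v c : A → ℝ}

theorem sum_mul_div_sub_one_sub_log_div (hv0 : ∀ a, 0 < v a) (hc0 : ∀ a, 0 < c a)
    (hvc : ∑ a, v a = ∑ a, c a) :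
    ∑ a, v a * (c a / v a - 1 - log (c a / v a)) = ∑ a, v a * log (v a / c a) := by
  have pointwise : ∀ a, v a * (c a / v a - 1 - log (c a / v a)) =
      c a - v a + v a * log (v a / c a) := fun a => by
    rw [log_div (hc0 a).ne' (hv0 a).ne', log_div (hv0 a).ne' (hc0 a).ne']
    field_simp [(hv0 a).ne']
    ring
  simp only [pointwise, sum_add_distrib, sum_sub_distrib, hvc, sub_self, zero_add]

theorem sum_mul_log_div_nonneg (hv0 : ∀ a, 0 < v a) (hc0 : ∀ a, 0 < c a)
    (hvc : ∑ a, v a = ∑ a, c a) : 0 ≤ ∑ a, v a * log (v a / c a) := by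
  rw [← sum_mul_div_sub_one_sub_log_div hv0 hc0 hvc]
  exact sum_nonneg fun a _ => mul_nonneg (hv0 a).le
    (by linarith [log_le_sub_one_of_pos (div_pos (hc0 a) (hv0 a))])

theorem sum_mul_posPart_log_div_le_sqrt (hv0 : ∀ a, 0 < v a) (hv1 : ∑ a, v a = 1)
    (hc0 : ∀ a, 0 < c a) (hc1 : ∑ a, c a = 1) :
    ∑ a, v a * (log (c a / v a))⁺ ≤ √(2 * ∑ a, v a * log (v a / c a)) := by
  set g : A → ℝ := fun a => 2 * (c a / v a - 1 - log (c a / v a))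
  have hg : ∀ a ∈ univ, 0 ≤ g a := fun a _ => by
    linarith [log_le_sub_one_of_pos (div_pos (hc0 a) (hv0 a))]
  calc ∑ a, v a * (log (c a / v a))⁺
      ≤ ∑ a, v a * √(g a) := sum_le_sum fun a _ => mul_le_mul_of_nonneg_left
        (posPart_log_le_sqrt_two_mul_sub_one_sub_log (div_pos (hc0 a) (hv0 a))) (hv0 a).le
    _ ≤ √(∑ a, v a * g a) := sum_mul_sqrt_le_sqrt_sum_mul _ (fun a _ => (hv0 a).le) hv1 hg
    _ = √(2 * ∑ a, v a * log (v a / c a)) := by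
      rw [← sum_mul_div_sub_one_sub_log_div hv0 hc0 (hv1.trans hc1.symm), mul_sum]
      simp only [g, mul_left_comm]

end Simplex

theorem approximate_pythagorean_kl_simplex_general {A : Type*} [Fintype A] [Nonempty A]
    (u v c : A → ℝ)
    (hu0 : ∀ a, 0 ≤ u a)
    (hv0 : ∀ a, 0 < v a) (hv1 : ∑ a, v a = 1)
    (hc0 : ∀ a, 0 < c a) (hc1 : ∑ a, c a = 1) :
    (∑ a, u a * Real.log (u a / v a)) + (∑ a, v a * Real.log (v a / c a)) -
        (∑ a, u a * Real.log (u a / c a)) ≤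
      (1 + Finset.univ.sup' Finset.univ_nonempty (fun a => u a / v a)) *
        ((∑ a, v a * Real.log (v a / c a)) +
          Real.sqrt (2 * ∑ a, v a * Real.log (v a / c a))) := by
  set M := univ.sup' univ_nonempty fun a => u a / v a
  set D := ∑ a, v a * log (v a / c a)
  have hu_le : ∀ a, u a ≤ M * v a := fun a =>
    (div_le_iff₀ (hv0 a)).1 (le_sup' (fun a => u a / v a) (mem_univ a))
  have hM : 0 ≤ M := by
    obtain ⟨a⟩ := ‹Nonempty A›
    exact nonneg_of_mul_nonneg_left ((hu0 a).trans (hu_le a)) (hv0 a)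
  have hD : 0 ≤ D := sum_mul_log_div_nonneg hv0 hc0 (hv1.trans hc1.symm)
  have three_point : (∑ a, u a * log (u a / v a)) + D - (∑ a, u a * log (u a / c a)) =
      D + ∑ a, u a * log (c a / v a) := by
    rw [add_sub_right_comm, ← sum_sub_distrib, add_comm]
    simp only [mul_log_div_sub_mul_log_div _ (hv0 _).ne' (hc0 _).ne']
  have cross_term : ∑ a, u a * log (c a / v a) ≤ M * √(2 * D) := calc
    ∑ a, u a * log (c a / v a) ≤ ∑ a, M * (v a * (log (c a / v a))⁺) :=
      sum_le_sum fun a _ => by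
        rw [← mul_assoc]
        exact (mul_le_mul_of_nonneg_left (le_posPart _) (hu0 a)).trans
          (mul_le_mul_of_nonneg_right (hu_le a) (posPart_nonneg _))
    _ ≤ M * √(2 * D) := by
      rw [← mul_sum]
      exact mul_le_mul_of_nonneg_left (sum_mul_posPart_log_div_le_sqrt hv0 hv1 hc0 hc1) hM
  rw [three_point]
  nlinarith [mul_nonneg hM hD, sqrt_nonneg (2 * D)]

/-- Let `Φ` be the negative entropy restricted to the simplex `Δ(A)`, so
`D_Φ(p, q) = D_KL(p‖q)`. For `v, c, u ∈ Δ(A)` with `v, c` fully supported and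
`M = ‖u/v‖_∞ = max_a u a / v a`,
`D_KL(u‖v) + D_KL(v‖c) - D_KL(u‖c) ≤ (1 + M) (D_KL(v‖c) + √(2 D_KL(v‖c)))`. -/
theorem approximate_pythagorean_kl_simplex {A : Type*} [Fintype A] [Nonempty A]
    (u v c : A → ℝ)
    (hu0 : ∀ a, 0 ≤ u a) (hu1 : ∑ a, u a = 1)
    (hv0 : ∀ a, 0 < v a) (hv1 : ∑ a, v a = 1)
    (hc0 : ∀ a, 0 < c a) (hc1 : ∑ a, c a = 1) :
    (∑ a, u a * Real.log (u a / v a)) + (∑ a, v a * Real.log (v a / c a)) -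
        (∑ a, u a * Real.log (u a / c a)) ≤
      (1 + Finset.univ.sup' Finset.univ_nonempty (fun a => u a / v a)) *
        ((∑ a, v a * Real.log (v a / c a)) +
          Real.sqrt (2 * ∑ a, v a * Real.log (v a / c a))) :=
  approximate_pythagorean_kl_simplex_general u v c hu0 hv0 hv1 hc0 hc1
end

section
/- Let Φ(x) = φ(x) + δ(x|L) where φ is a convex function of Legendre type on ℝⁿ and L is an affine subspace with int(dom φ) ∩ L ≠ ∅. Then for every x ∈ int(dom φ) ∩ L and every subgradient g ∈ ∂Φ(x), it holds that ∇Φ*(g) = x, where Φ* is the convex conjugate of Φ. -/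
open InnerProductSpace

/-- Gradient inequality for a convex function at an interior point. -/
lemma grad_ineq {n : ℕ} {s : Set (EuclideanSpace ℝ (Fin n))}
    {φ : EuclideanSpace ℝ (Fin n) → ℝ} {g x : EuclideanSpace ℝ (Fin n)}
    (hconv : ConvexOn ℝ s φ) (hx : x ∈ s) (hg : HasGradientAt φ g x)
    {z : EuclideanSpace ℝ (Fin n)} (hz : z ∈ s) :
    φ x + (inner ℝ g (z - x) : ℝ) ≤ φ z := by
  rcases eq_or_ne z x with rfl | hne
  · simp
  · -- restrict to the segment
    set c : ℝ →ᵃ[ℝ] EuclideanSpace ℝ (Fin n) := AffineMap.lineMap x z with hc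
    have hψ : ConvexOn ℝ (Set.Icc (0:ℝ) 1) (φ ∘ c) := by
      refine (hconv.comp_affineMap c).subset ?_ (convex_Icc 0 1)
      intro t ht
      simp only [Set.mem_preimage, hc, AffineMap.lineMap_apply_module]
      exact hconv.1 hx hz (by linarith [ht.1, ht.2]) ht.1 (by ring)
    have hderiv : HasDerivAt (φ ∘ c) (inner ℝ g (z - x) : ℝ) 0 := by
      have hcd : HasDerivAt c (z - x) 0 := by
        have : HasDerivAt (fun t : ℝ => t • (z - x) + x) ((1:ℝ) • (z - x)) 0 :=
          ((hasDerivAt_id (0:ℝ)).smul_const (z - x)).add_const x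
        have hceq : (⇑c) = fun t : ℝ => t • (z - x) + x := by
          funext t
          simp only [hc, AffineMap.lineMap_apply_module]
          module
        rw [hceq]
        exact this.congr_deriv (one_smul ℝ (z - x))
      have hfd : HasFDerivAt φ (toDual ℝ _ g) (c 0) := by
        simpa [hc] using (hasGradientAt_iff_hasFDerivAt.mp hg)
      have := hfd.comp_hasDerivAt (x := (0:ℝ)) hcd
      simpa using this
    have hle := hψ.le_slope_of_hasDerivAt (x := (0:ℝ)) (y := (1:ℝ))
      (by simp) (by simp) one_pos hderiv
    have h0 : c 0 = x := by simp [hc]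
    have h1 : c 1 = z := by simp [hc]
    have : slope (φ ∘ c) 0 1 = φ z - φ x := by
      simp [slope, h0, h1]
    rw [this] at hle
    linarith

/-- Let `Φ = φ + δ(·|L)` where `φ` is a convex function of Legendre type
on `ℝⁿ` (proper closed convex, differentiable and strictly convex on the nonempty
interior of its domain `s`, with `‖∇φ‖ → ∞` approaching the boundary) and
`L = x₀ + V` an affine subspace with `int (dom φ) ∩ L ≠ ∅`. Then for every
`x ∈ int (dom φ) ∩ L` and every subgradient `g = ∇φ x + ξ ∈ ∂Φ x` (`ξ ∈ Vᗮ`),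
`∇Φ* g = x`, i.e. `x` is the unique maximizer of `z ↦ ⟨z, g⟩ - Φ z`. -/
theorem gradient_conjugate_gradient_eq {n : ℕ}
    (s : Set (EuclideanSpace ℝ (Fin n)))
    (φ : EuclideanSpace ℝ (Fin n) → ℝ)
    (f : EuclideanSpace ℝ (Fin n) → EuclideanSpace ℝ (Fin n))
    (hsne : (interior s).Nonempty) (hsclosed : IsClosed s)
    (hconv : ConvexOn ℝ s φ) (hstrict : StrictConvexOn ℝ (interior s) φ)
    (hdiff : ∀ x ∈ interior s, HasGradientAt φ (f x) x)
    (hbd : ∀ xk : ℕ → EuclideanSpace ℝ (Fin n), (∀ k, xk k ∈ interior s) →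
      ∀ y ∈ frontier s, Filter.Tendsto xk Filter.atTop (nhds y) →
        Filter.Tendsto (fun k => ‖f (xk k)‖) Filter.atTop Filter.atTop)
    (V : Submodule ℝ (EuclideanSpace ℝ (Fin n))) (x₀ : EuclideanSpace ℝ (Fin n))
    (hLs : ∃ w, w - x₀ ∈ V ∧ w ∈ interior s)
    (x : EuclideanSpace ℝ (Fin n)) (hxL : x - x₀ ∈ V) (hxs : x ∈ interior s)
    (ξ : EuclideanSpace ℝ (Fin n)) (hξ : ξ ∈ Vᗮ) :
    (∀ z, z - x₀ ∈ V → z ∈ s →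
      (inner ℝ z (f x + ξ) : ℝ) - φ z ≤ (inner ℝ x (f x + ξ) : ℝ) - φ x) ∧
    (∀ z, z - x₀ ∈ V → z ∈ s →
      (inner ℝ z (f x + ξ) : ℝ) - φ z = (inner ℝ x (f x + ξ) : ℝ) - φ x → z = x) := by
  have hxs' : x ∈ s := interior_subset hxs
  have hgrad := hdiff x hxs
  -- ξ is orthogonal to z - x for z ∈ L
  have hξ0 : ∀ z : EuclideanSpace ℝ (Fin n), z - x₀ ∈ V → (inner ℝ (z - x) ξ : ℝ) = 0 := by
    intro z hz
    have : z - x ∈ V := by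
      have := V.sub_mem hz hxL
      simpa using this
    exact real_inner_comm (z - x) ξ ▸ (hξ (z - x) this)
  -- key rewriting
  have key : ∀ z : EuclideanSpace ℝ (Fin n), z - x₀ ∈ V →
      ((inner ℝ z (f x + ξ) : ℝ) - φ z) - ((inner ℝ x (f x + ξ) : ℝ) - φ x)
      = (φ x + (inner ℝ (f x) (z - x) : ℝ)) - φ z := by
    intro z hz
    have h1 : (inner ℝ (z - x) (f x + ξ) : ℝ)
        = (inner ℝ z (f x + ξ) : ℝ) - (inner ℝ x (f x + ξ) : ℝ) := by
      rw [inner_sub_left]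
    have h2 : (inner ℝ (z - x) (f x + ξ) : ℝ)
        = (inner ℝ (z - x) (f x) : ℝ) + (inner ℝ (z - x) ξ : ℝ) := by
      rw [inner_add_right]
    rw [hξ0 z hz] at h2
    have h3 : (inner ℝ (f x) (z - x) : ℝ) = (inner ℝ (z - x) (f x) : ℝ) :=
      real_inner_comm _ _
    linarith
  constructor
  · intro z hzL hzs
    have hge := grad_ineq hconv hxs' hgrad hzs
    have := key z hzL
    linarith
  · intro z hzL hzs heq
    by_contra hne
    -- equality means φ z = φ x + ⟪f x, z - x⟫
    have heq' : φ z = φ x + (inner ℝ (f x) (z - x) : ℝ) := by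
      have := key z hzL
      linarith
    -- midpoints
    set m : EuclideanSpace ℝ (Fin n) := (1/2 : ℝ) • x + (1/2 : ℝ) • z with hm
    have hms : m ∈ interior s :=
      hconv.1.combo_interior_self_mem_interior hxs hzs (by norm_num) (by norm_num)
        (by norm_num)
    have hms' : m ∈ s := interior_subset hms
    -- φ m = ℓ m where ℓ w = φ x + ⟪f x, w - x⟫
    have hub : φ m ≤ (1/2 : ℝ) * φ x + (1/2 : ℝ) * φ z :=
      hconv.2 hxs' hzs (by norm_num) (by norm_num) (by norm_num)
    have hlm : (inner ℝ (f x) (m - x) : ℝ) = (1/2 : ℝ) * (inner ℝ (f x) (z - x) : ℝ) := by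
      have : m - x = (1/2 : ℝ) • (z - x) := by
        rw [hm]; module
      rw [this, real_inner_smul_right]
    have hlb : φ x + (inner ℝ (f x) (m - x) : ℝ) ≤ φ m :=
      grad_ineq hconv hxs' hgrad hms'
    have hφm : φ m = φ x + (inner ℝ (f x) (m - x) : ℝ) := by
      rw [hlm]; nlinarith [hlb, hub, heq', hlm]
    -- strict convexity at the midpoint of x and m
    have hxm : x ≠ m := by
      intro h
      apply hne
      have hh : x = (1/2 : ℝ) • x + (1/2 : ℝ) • z := h.trans hm
      have h4 : (0 : EuclideanSpace ℝ (Fin n)) = (1/2 : ℝ) • (z - x) := by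
        calc (0 : EuclideanSpace ℝ (Fin n))
            = ((1/2 : ℝ) • x + (1/2 : ℝ) • z) - x := by rw [← hh]; simp
          _ = (1/2 : ℝ) • (z - x) := by module
      have h5 : z - x = 0 := by
        rcases smul_eq_zero.mp h4.symm with h | h
        · norm_num at h
        · exact h
      have := sub_eq_zero.mp h5
      exact this
    have hstrictlt : φ ((1/2 : ℝ) • x + (1/2 : ℝ) • m)
        < (1/2 : ℝ) * φ x + (1/2 : ℝ) * φ m :=
      hstrict.2 hxs hms hxm (by norm_num) (by norm_num) (by norm_num)
    -- but the gradient inequality gives the reverse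
    set m' : EuclideanSpace ℝ (Fin n) := (1/2 : ℝ) • x + (1/2 : ℝ) • m with hm'
    have hm's : m' ∈ s :=
      interior_subset (hconv.1.combo_interior_self_mem_interior hxs hms'
        (by norm_num) (by norm_num) (by norm_num))
    have hlb' : φ x + (inner ℝ (f x) (m' - x) : ℝ) ≤ φ m' :=
      grad_ineq hconv hxs' hgrad hm's
    have hlm' : (inner ℝ (f x) (m' - x) : ℝ) = (1/2 : ℝ) * (inner ℝ (f x) (m - x) : ℝ) := by
      have : m' - x = (1/2 : ℝ) • (m - x) := by rw [hm']; module
      rw [this, real_inner_smul_right]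
    rw [hlm'] at hlb'
    have : (1/2 : ℝ) * φ x + (1/2 : ℝ) * φ m ≤ φ m' := by
      rw [hφm]; linarith
    exact absurd hstrictlt (not_lt.mpr this)
end

section
/- Let Φ = φ + δ(·|L) with φ Legendre type, L an affine subspace, int(dom φ) ∩ L ≠ ∅, and Φ* the convex conjugate. Then for any x*, y* ∈ int(dom Φ*), the dual Bregman identity holds: D_{Φ*}(x*, y*) = D_Φ(∇Φ*(y*), ∇Φ*(x*)). -/
set_option maxHeartbeats 800000


/-- Dual Bregman identity. Let `Φ = φ + δ(·|L)` with `φ` Legendre type,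
`L = x₀ + V` affine, `int (dom φ) ∩ L ≠ ∅`. For `x*, y* ∈ int (dom Φ*)`, with
`gx = ∇Φ*(x*)` and `gy = ∇Φ*(y*)` the (attained, interior) maximizers of
`z ↦ ⟨z, ·⟩ - φ z` over `L ∩ dom φ`, so that `Φ*(x*) = ⟨gx, x*⟩ - φ gx` and
`Φ*(y*) = ⟨gy, y*⟩ - φ gy`, we have
`D_{Φ*}(x*, y*) = Φ*(x*) - Φ*(y*) - ⟨∇Φ*(y*), x* - y*⟩
  = Φ(∇Φ*(y*)) - Φ(∇Φ*(x*)) - ⟨∇Φ(∇Φ*(x*)), ∇Φ*(y*) - ∇Φ*(x*)⟩ = D_Φ(∇Φ*(y*), ∇Φ*(x*))`. -/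
theorem dual_bregman_identity {n : ℕ}
    (s : Set (EuclideanSpace ℝ (Fin n)))
    (φ : EuclideanSpace ℝ (Fin n) → ℝ)
    (f : EuclideanSpace ℝ (Fin n) → EuclideanSpace ℝ (Fin n))
    (hsne : (interior s).Nonempty) (hsclosed : IsClosed s)
    (hconv : ConvexOn ℝ s φ) (hstrict : StrictConvexOn ℝ (interior s) φ)
    (hdiff : ∀ x ∈ interior s, HasGradientAt φ (f x) x)
    (hbd : ∀ xk : ℕ → EuclideanSpace ℝ (Fin n), (∀ k, xk k ∈ interior s) →
      ∀ y ∈ frontier s, Filter.Tendsto xk Filter.atTop (nhds y) →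
        Filter.Tendsto (fun k => ‖f (xk k)‖) Filter.atTop Filter.atTop)
    (V : Submodule ℝ (EuclideanSpace ℝ (Fin n))) (x₀ : EuclideanSpace ℝ (Fin n))
    (hLs : ∃ w, w - x₀ ∈ V ∧ w ∈ interior s)
    (xstar ystar gx gy : EuclideanSpace ℝ (Fin n))
    (hgxL : gx - x₀ ∈ V) (hgxs : gx ∈ interior s)
    (hgyL : gy - x₀ ∈ V) (hgys : gy ∈ interior s)
    (hgxmax : ∀ z, z - x₀ ∈ V → z ∈ s →
      (inner ℝ z xstar : ℝ) - φ z ≤ (inner ℝ gx xstar : ℝ) - φ gx)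
    (hgymax : ∀ z, z - x₀ ∈ V → z ∈ s →
      (inner ℝ z ystar : ℝ) - φ z ≤ (inner ℝ gy ystar : ℝ) - φ gy) :
    ((inner ℝ gx xstar : ℝ) - φ gx) - ((inner ℝ gy ystar : ℝ) - φ gy) -
        inner ℝ gy (xstar - ystar) =
      φ gy - φ gx - (inner ℝ (f gx) (gy - gx) : ℝ) := by

  -- Key stationarity: for v ∈ V, ⟪v, xstar⟫ = ⟪f gx, v⟫
  have key : ∀ v ∈ V, (inner ℝ v xstar : ℝ) = inner ℝ (f gx) v := by
    intro v hv
    set h : ℝ → ℝ := fun t => (inner ℝ (gx + t • v) xstar : ℝ) - φ (gx + t • v) with hh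
    have hc : HasDerivAt (fun t : ℝ => gx + t • v) v 0 := by
      simpa using ((hasDerivAt_id (0:ℝ)).smul_const v).const_add gx
    have hφ : HasDerivAt (fun t : ℝ => φ (gx + t • v)) ((inner ℝ (f gx) v : ℝ)) 0 := by
      have hg : HasFDerivAt φ
          ((InnerProductSpace.toDual ℝ (EuclideanSpace ℝ (Fin n))) (f gx))
          (gx + (0:ℝ) • v) := by simpa using (hdiff gx hgxs).hasFDerivAt
      have := hg.comp_hasDerivAt 0 hc
      simp at this; exact this
    have hin : HasDerivAt (fun t : ℝ => (inner ℝ (gx + t • v) xstar : ℝ))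
        ((inner ℝ v xstar : ℝ)) 0 := by
      have : (fun t : ℝ => (inner ℝ (gx + t • v) xstar : ℝ)) =
          fun t : ℝ => (inner ℝ gx xstar : ℝ) + t * (inner ℝ v xstar : ℝ) := by
        funext t
        simp [inner_add_left, inner_smul_left, real_inner_smul_left]
      rw [this]
      simpa using ((hasDerivAt_id (0:ℝ)).mul_const _).const_add ((inner ℝ gx xstar : ℝ))
    have hderiv : HasDerivAt h ((inner ℝ v xstar : ℝ) - (inner ℝ (f gx) v : ℝ)) 0 :=
      hin.sub hφ
    have hmax : IsLocalMax h 0 := by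
      have hcont : Continuous (fun t : ℝ => gx + t • v) := by continuity
      have hev : ∀ᶠ t in nhds (0:ℝ), gx + t • v ∈ interior s := by
        have : gx + (0:ℝ) • v ∈ interior s := by simpa using hgxs
        exact hcont.continuousAt.eventually_mem (isOpen_interior.mem_nhds this)
      filter_upwards [hev] with t ht
      have hmem : gx + t • v - x₀ ∈ V := by
        have : gx + t • v - x₀ = (gx - x₀) + t • v := by abel
        rw [this]; exact V.add_mem hgxL (V.smul_mem t hv)
      have := hgxmax (gx + t • v) hmem (interior_subset ht)
      simpa [hh] using this
    have := hmax.hasDerivAt_eq_zero hderiv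
    linarith
  have hvmem : gx - gy ∈ V := by
    have := V.sub_mem hgxL hgyL
    simpa using this
  have hk := key (gx - gy) hvmem
  have e1 : (inner ℝ gy (xstar - ystar) : ℝ) = inner ℝ gy xstar - inner ℝ gy ystar :=
    inner_sub_right _ _ _
  have e2 : (inner ℝ (gx - gy) xstar : ℝ) = inner ℝ gx xstar - inner ℝ gy xstar :=
    inner_sub_left _ _ _
  have e3 : (inner ℝ (f gx) (gx - gy) : ℝ) = inner ℝ (f gx) gx - inner ℝ (f gx) gy :=
    inner_sub_right _ _ _
  have e4 : (inner ℝ (f gx) (gy - gx) : ℝ) = inner ℝ (f gx) gy - inner ℝ (f gx) gx :=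
    inner_sub_right _ _ _
  rw [e1, e4]
  rw [e2, e3] at hk
  linarith
end

section
/- Performance difference lemma: in a finite discounted MDP, for any two policies π, π̃ and initial distribution ρ, V^π_ρ − V^{π̃}_ρ = (1/(1−γ)) E_{s ∼ d^π_ρ} [⟨Q^{π̃}_s, π_s − π̃_s⟩], where Q^{π̃}_s is the vector of Q-values of π̃ at state s. -/
noncomputable section

/-- One step of the state-distribution dynamics induced by policy `π`. -/
def stepDist {S A : Type*} [Fintype S] [Fintype A]
    (P : S → A → S → ℝ) (π : S → A → ℝ) (μ : S → ℝ) : S → ℝ :=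
  fun s' => ∑ s, ∑ a, μ s * π s a * P s a s'

/-- `stateDist P π ρ t s = P^π_{s₀∼ρ}(s_t = s)`. -/
def stateDist {S A : Type*} [Fintype S] [Fintype A]
    (P : S → A → S → ℝ) (π : S → A → ℝ) (ρ : S → ℝ) : ℕ → S → ℝ
  | 0 => ρ
  | t + 1 => stepDist P π (stateDist P π ρ t)

/-- The discounted state-visitation distribution `d^π_ρ`. -/
def visitation {S A : Type*} [Fintype S] [Fintype A]
    (P : S → A → S → ℝ) (π : S → A → ℝ) (γ : ℝ) (ρ : S → ℝ) : S → ℝ :=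
  fun s => (1 - γ) * ∑' t : ℕ, γ ^ t * stateDist P π ρ t s

/-- The value function `V^π_s`, the expected discounted cumulative cost starting
from state `s` and following policy `π`. -/
def valueV {S A : Type*} [Fintype S] [Fintype A] [DecidableEq S]
    (P : S → A → S → ℝ) (π : S → A → ℝ) (c : S → A → ℝ) (γ : ℝ) : S → ℝ :=
  fun s => ∑' t : ℕ, γ ^ t *
    ∑ s', stateDist P π (fun s'' => if s'' = s then 1 else 0) t s' * ∑ a, π s' a * c s' a

/-- The Q-value function `Q^π_{s,a}`. -/
def valueQ {S A : Type*} [Fintype S] [Fintype A] [DecidableEq S]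
    (P : S → A → S → ℝ) (π : S → A → ℝ) (c : S → A → ℝ) (γ : ℝ) : S → A → ℝ :=
  fun s a => c s a + γ * ∑ s', P s a s' * valueV P π c γ s'

/-!
Write `V = V^π̃`, and `r_π s = ∑ a, π s a * c s a`, `P_π` for the one-step cost and transition
of `π`. The Bellman equation for `π̃` turns the advantage `⟨Q^π̃_s, π_s - π̃_s⟩` into
`r_π s + γ (P_π V) s - V s`. Integrating against the law `μ_t` of the state at time `t` under `π`
and discounting, the terms `γ^(t+1) ⟨μ_(t+1), V⟩ - γ^t ⟨μ_t, V⟩` telescope to `-⟨ρ, V⟩`, while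
the `r_π` terms add up to `V^π_ρ`; and `(1 - γ)⁻¹ ∑ s, d^π_ρ s * g s` is the discounted sum of
the `⟨μ_t, g⟩`.
-/

/-- Unlike `Matrix.rowStochastic`, not required to be square. -/
def IsRowStochastic {ι κ : Type*} [Fintype κ] (M : ι → κ → ℝ) : Prop :=
  (∀ i k, 0 ≤ M i k) ∧ ∀ i, ∑ k, M i k = 1

theorem summable_geometric_mul_of_abs_le {γ C : ℝ} (hγ0 : 0 ≤ γ) (hγ1 : γ < 1) {g : ℕ → ℝ}
    (hg : ∀ t, |g t| ≤ C) : Summable fun t => γ ^ t * g t :=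
  ((summable_geometric_of_lt_one hγ0 hγ1).mul_right C).of_norm_bounded fun t => by
    rw [Real.norm_eq_abs, abs_mul, abs_pow, abs_of_nonneg hγ0]
    exact mul_le_mul_of_nonneg_left (hg t) (pow_nonneg hγ0 t)

theorem Summable.tsum_succ_sub {u : ℕ → ℝ} (hu : Summable u) :
    ∑' t, (u (t + 1) - u t) = -u 0 := by
  have hu' : Summable fun t => u (t + 1) := hu.comp_injective (add_left_injective 1)
  rw [hu'.tsum_sub hu, hu.tsum_eq_zero_add]
  ring

namespace MDP

variable {S A : Type*} [Fintype S] [Fintype A] (P : S → A → S → ℝ) (π : S → A → ℝ)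

theorem sum_stepDist_mul (μ h : S → ℝ) :
    ∑ s', stepDist P π μ s' * h s' = ∑ s, μ s * ∑ a, π s a * ∑ s', P s a s' * h s' := by
  simp only [stepDist, Finset.sum_mul, Finset.mul_sum]
  rw [Finset.sum_comm]
  refine Finset.sum_congr rfl fun s _ => ?_
  rw [Finset.sum_comm]
  simp only [mul_assoc]

theorem abs_stepDist_le (hπ : IsRowStochastic π) (hP : ∀ s, IsRowStochastic (P s))
    (μ : S → ℝ) (s' : S) :
    |stepDist P π μ s'| ≤ stepDist P π (fun s => |μ s|) s' := by
  refine (Finset.abs_sum_le_sum_abs _ _).trans (Finset.sum_le_sum fun s _ => ?_)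
  refine (Finset.abs_sum_le_sum_abs _ _).trans (le_of_eq (Finset.sum_congr rfl fun a _ => ?_))
  rw [abs_mul, abs_mul, abs_of_nonneg (hπ.1 s a), abs_of_nonneg ((hP s).1 a s')]

-- The one-step map is an `ℓ¹`-contraction, so discounted series converge for any signed `ρ`.
theorem sum_abs_stepDist_le (hπ : IsRowStochastic π) (hP : ∀ s, IsRowStochastic (P s))
    (μ : S → ℝ) :
    ∑ s', |stepDist P π μ s'| ≤ ∑ s, |μ s| := by
  have hP1 : ∀ s a, ∑ s', P s a s' = 1 := fun s => (hP s).2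
  have total : ∑ s', stepDist P π (fun s => |μ s|) s' * 1 = ∑ s, |μ s| := by
    rw [sum_stepDist_mul]
    simp only [mul_one, hP1, hπ.2]
  simpa [← total] using Finset.sum_le_sum fun s' _ => abs_stepDist_le P π hπ hP μ s'

theorem sum_abs_stateDist_le (hπ : IsRowStochastic π) (hP : ∀ s, IsRowStochastic (P s))
    (ρ : S → ℝ) (t : ℕ) : ∑ s, |stateDist P π ρ t s| ≤ ∑ s, |ρ s| := by
  induction t with
  | zero => rfl
  | succ t ih => exact (sum_abs_stepDist_le P π hπ hP _).trans ih

theorem abs_stateDist_le (hπ : IsRowStochastic π) (hP : ∀ s, IsRowStochastic (P s))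
    (ρ : S → ℝ) (t : ℕ) (s : S) : |stateDist P π ρ t s| ≤ ∑ s, |ρ s| :=
  (Finset.single_le_sum (fun _ _ => abs_nonneg _) (Finset.mem_univ s)).trans
    (sum_abs_stateDist_le P π hπ hP ρ t)

theorem summable_stateDist_sum_mul (hπ : IsRowStochastic π) (hP : ∀ s, IsRowStochastic (P s))
    {γ : ℝ} (hγ0 : 0 ≤ γ) (hγ1 : γ < 1) (ρ h : S → ℝ) :
    Summable fun t => γ ^ t * ∑ s, stateDist P π ρ t s * h s := by
  refine summable_geometric_mul_of_abs_le (C := (∑ s, |ρ s|) * ‖h‖) hγ0 hγ1 fun t => ?_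
  calc |∑ s, stateDist P π ρ t s * h s|
      ≤ ∑ s, |stateDist P π ρ t s| * ‖h‖ := by
        refine (Finset.abs_sum_le_sum_abs _ _).trans (Finset.sum_le_sum fun s _ => ?_)
        rw [abs_mul]
        exact mul_le_mul_of_nonneg_left (norm_le_pi_norm h s) (abs_nonneg _)
    _ ≤ (∑ s, |ρ s|) * ‖h‖ := by
        rw [← Finset.sum_mul]
        exact mul_le_mul_of_nonneg_right (sum_abs_stateDist_le P π hπ hP ρ t) (norm_nonneg h)

theorem sum_visitation_mul (hπ : IsRowStochastic π) (hP : ∀ s, IsRowStochastic (P s))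
    {γ : ℝ} (hγ0 : 0 ≤ γ) (hγ1 : γ < 1) (ρ h : S → ℝ) :
    ∑ s, visitation P π γ ρ s * h s =
      (1 - γ) * ∑' t, γ ^ t * ∑ s, stateDist P π ρ t s * h s := by
  have hs (s : S) : Summable fun t => γ ^ t * (stateDist P π ρ t s * h s) := by
    simpa only [mul_assoc] using
      (summable_geometric_mul_of_abs_le hγ0 hγ1 (abs_stateDist_le P π hπ hP ρ · s)).mul_right (h s)
  calc ∑ s, visitation P π γ ρ s * h s
      = (1 - γ) * ∑ s, ∑' t, γ ^ t * (stateDist P π ρ t s * h s) := by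
        simp only [visitation, Finset.mul_sum, mul_assoc, ← tsum_mul_right]
    _ = (1 - γ) * ∑' t, γ ^ t * ∑ s, stateDist P π ρ t s * h s := by
        rw [← Summable.tsum_finsetSum fun s _ => hs s]
        simp only [Finset.mul_sum]

theorem stateDist_succ' (ρ : S → ℝ) (t : ℕ) :
    stateDist P π ρ (t + 1) = stateDist P π (stepDist P π ρ) t := by
  induction t with
  | zero => rfl
  | succ t ih => rw [stateDist, ih, stateDist]

theorem stateDist_eq_sum_mul [DecidableEq S] (ρ : S → ℝ) (t : ℕ) (s' : S) :
    stateDist P π ρ t s' =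
      ∑ s₀, ρ s₀ * stateDist P π (fun s => if s = s₀ then 1 else 0) t s' := by
  induction t generalizing s' with
  | zero => simp [stateDist]
  | succ t ih =>
    simp only [stateDist, stepDist]
    simp_rw [ih, Finset.sum_mul, Finset.mul_sum, mul_assoc]
    conv_rhs => rw [Finset.sum_comm]
    exact Finset.sum_congr rfl fun s _ => Finset.sum_comm

/-- `V^π_μ`, for an arbitrary real weighting `μ` of the initial states. -/
def distValue (c : S → A → ℝ) (γ : ℝ) (μ : S → ℝ) : ℝ :=
  ∑' t : ℕ, γ ^ t * ∑ s, stateDist P π μ t s * ∑ a, π s a * c s a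

variable (c : S → A → ℝ) {γ : ℝ}

theorem distValue_eq_add (hπ : IsRowStochastic π) (hP : ∀ s, IsRowStochastic (P s))
    (hγ0 : 0 ≤ γ) (hγ1 : γ < 1) (μ : S → ℝ) :
    distValue P π c γ μ =
      ∑ s, μ s * ∑ a, π s a * c s a + γ * distValue P π c γ (stepDist P π μ) := by
  rw [distValue, (summable_stateDist_sum_mul P π hπ hP hγ0 hγ1 μ _).tsum_eq_zero_add, distValue,
    ← tsum_mul_left]
  congr 1
  · simp [stateDist]
  · simp only [stateDist_succ', pow_succ', mul_assoc]

variable [DecidableEq S]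

theorem sum_mul_valueV (hπ : IsRowStochastic π) (hP : ∀ s, IsRowStochastic (P s))
    (hγ0 : 0 ≤ γ) (hγ1 : γ < 1) (μ : S → ℝ) :
    ∑ s, μ s * valueV P π c γ s = distValue P π c γ μ := by
  have hδ (s₀ : S) := summable_stateDist_sum_mul P π hπ hP hγ0 hγ1
    (fun s => if s = s₀ then 1 else 0) (fun s => ∑ a, π s a * c s a)
  simp only [valueV, distValue, ← tsum_mul_left]
  rw [← Summable.tsum_finsetSum fun s _ => (hδ s).mul_left (μ s)]
  refine tsum_congr fun t => ?_
  simp_rw [stateDist_eq_sum_mul P π μ t, Finset.sum_mul, Finset.mul_sum]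
  rw [Finset.sum_comm]
  exact Finset.sum_congr rfl fun s _ => Finset.sum_congr rfl fun s' _ =>
    Finset.sum_congr rfl fun a _ => by ring

theorem sum_mul_sum_valueQ_mul (σ : S → A → ℝ) (μ : S → ℝ) :
    ∑ s, μ s * ∑ a, valueQ P σ c γ s a * π s a =
      ∑ s, μ s * ∑ a, π s a * c s a + γ * ∑ s, stepDist P π μ s * valueV P σ c γ s := by
  rw [sum_stepDist_mul]
  simp only [valueQ, add_mul, Finset.sum_add_distrib, mul_add, Finset.mul_sum, Finset.sum_mul]
  congr 1 <;> refine Finset.sum_congr rfl fun s _ => Finset.sum_congr rfl fun a _ => ?_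
  · ring
  · exact Finset.sum_congr rfl fun s' _ => by ring

theorem sum_mul_advantage {σ : S → A → ℝ} (hσ : IsRowStochastic σ)
    (hP : ∀ s, IsRowStochastic (P s)) (hγ0 : 0 ≤ γ) (hγ1 : γ < 1) (μ : S → ℝ) :
    ∑ s, μ s * ∑ a, valueQ P σ c γ s a * (π s a - σ s a) =
      ∑ s, μ s * ∑ a, π s a * c s a + γ * ∑ s, stepDist P π μ s * valueV P σ c γ s -
        ∑ s, μ s * valueV P σ c γ s := by
  have bellman : ∑ s, μ s * valueV P σ c γ s =
      ∑ s, μ s * ∑ a, σ s a * c s a + γ * ∑ s, stepDist P σ μ s * valueV P σ c γ s := by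
    rw [sum_mul_valueV P σ c hσ hP hγ0 hγ1, sum_mul_valueV P σ c hσ hP hγ0 hγ1,
      distValue_eq_add P σ c hσ hP hγ0 hγ1]
  simp only [mul_sub, Finset.sum_sub_distrib]
  rw [sum_mul_sum_valueQ_mul, sum_mul_sum_valueQ_mul, bellman]

theorem tsum_discounted_advantage {σ : S → A → ℝ} (hπ : IsRowStochastic π) (hσ : IsRowStochastic σ)
    (hP : ∀ s, IsRowStochastic (P s)) (hγ0 : 0 ≤ γ) (hγ1 : γ < 1) (ρ : S → ℝ) :
    ∑' t, γ ^ t * ∑ s, stateDist P π ρ t s * ∑ a, valueQ P σ c γ s a * (π s a - σ s a) =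
      distValue P π c γ ρ - ∑ s, ρ s * valueV P σ c γ s := by
  set u : ℕ → ℝ := fun t => γ ^ t * ∑ s, stateDist P π ρ t s * valueV P σ c γ s
  have hu : Summable u := summable_stateDist_sum_mul P π hπ hP hγ0 hγ1 ρ _
  have hcost := summable_stateDist_sum_mul P π hπ hP hγ0 hγ1 ρ (fun s => ∑ a, π s a * c s a)
  have term (t : ℕ) :
      γ ^ t * ∑ s, stateDist P π ρ t s * ∑ a, valueQ P σ c γ s a * (π s a - σ s a) =
        γ ^ t * ∑ s, stateDist P π ρ t s * ∑ a, π s a * c s a + (u (t + 1) - u t) := by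
    have hstep : stepDist P π (stateDist P π ρ t) = stateDist P π ρ (t + 1) := rfl
    rw [sum_mul_advantage P π c hσ hP hγ0 hγ1, hstep]
    simp only [u, pow_succ]
    ring
  have hshift : Summable fun t => u (t + 1) - u t :=
    (hu.comp_injective (add_left_injective 1)).sub hu
  rw [tsum_congr term, hcost.tsum_add hshift, hu.tsum_succ_sub]
  simp [u, stateDist, distValue, sub_eq_add_neg]

end MDP

open MDP in
theorem performance_difference_general {S A : Type*} [Fintype S] [Fintype A] [DecidableEq S]
    (P : S → A → S → ℝ) (π πt : S → A → ℝ) (c : S → A → ℝ) (γ : ℝ) (ρ : S → ℝ)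
    (hγ0 : 0 < γ) (hγ1 : γ < 1)
    (hP0 : ∀ s a s', 0 ≤ P s a s') (hP1 : ∀ s a, ∑ s', P s a s' = 1)
    (hπ0 : ∀ s a, 0 ≤ π s a) (hπ1 : ∀ s, ∑ a, π s a = 1)
    (hπt0 : ∀ s a, 0 ≤ πt s a) (hπt1 : ∀ s, ∑ a, πt s a = 1) :
    (∑ s, ρ s * valueV P π c γ s) - (∑ s, ρ s * valueV P πt c γ s) =
      (1 / (1 - γ)) * ∑ s, visitation P π γ ρ s *
        ∑ a, valueQ P πt c γ s a * (π s a - πt s a) := by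
  have hP : ∀ s, IsRowStochastic (P s) := fun s => ⟨hP0 s, hP1 s⟩
  have hπ : IsRowStochastic π := ⟨hπ0, hπ1⟩
  rw [sum_mul_valueV P π c hπ hP hγ0.le hγ1,
    ← tsum_discounted_advantage P π c hπ ⟨hπt0, hπt1⟩ hP hγ0.le hγ1,
    sum_visitation_mul P π hπ hP hγ0.le hγ1, one_div, inv_mul_cancel_left₀ (sub_ne_zero.2 hγ1.ne')]

/-- Performance difference lemma. In a finite discounted MDP, for any
two policies `π, π̃` and initial distribution `ρ`,
`V^π_ρ - V^π̃_ρ = (1/(1-γ)) E_{s ∼ d^π_ρ} ⟨Q^π̃_s, π_s - π̃_s⟩`. -/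
theorem performance_difference {S A : Type*} [Fintype S] [Fintype A] [DecidableEq S]
    (P : S → A → S → ℝ) (π πt : S → A → ℝ) (c : S → A → ℝ) (γ : ℝ) (ρ : S → ℝ)
    (hγ0 : 0 < γ) (hγ1 : γ < 1)
    (hP0 : ∀ s a s', 0 ≤ P s a s') (hP1 : ∀ s a, ∑ s', P s a s' = 1)
    (hπ0 : ∀ s a, 0 ≤ π s a) (hπ1 : ∀ s, ∑ a, π s a = 1)
    (hπt0 : ∀ s a, 0 ≤ πt s a) (hπt1 : ∀ s, ∑ a, πt s a = 1)
    (hρ0 : ∀ s, 0 ≤ ρ s) (hρ1 : ∑ s, ρ s = 1) :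
    (∑ s, ρ s * valueV P π c γ s) - (∑ s, ρ s * valueV P πt c γ s) =
      (1 / (1 - γ)) * ∑ s, visitation P π γ ρ s *
        ∑ a, valueQ P πt c γ s a * (π s a - πt s a) :=
  performance_difference_general P π πt c γ ρ hγ0 hγ1 hP0 hP1 hπ0 hπ1 hπt0 hπt1
end
end

section
/- Entropy-regularized performance difference lemma: in a finite discounted MDP with entropy regularization strength τ > 0, for any two policies π, π̃ and initial distribution ρ, V^π_{τ,ρ} − V^{π̃}_{τ,ρ} = (1/(1−γ)) E_{s ∼ d^π_ρ} [⟨Q^{π̃}_{τ,s}, π_s − π̃_s⟩ + τ D_KL(π_s ‖ π̃_s)]. -/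
noncomputable section

/-- The entropy-regularized value function
`V^π_{τ,s} = E[∑_t γ^t (c(s_t,a_t) + τ log π(a_t|s_t)) | s₀ = s]`. -/
def valueVreg {S A : Type*} [Fintype S] [Fintype A] [DecidableEq S]
    (P : S → A → S → ℝ) (π : S → A → ℝ) (c : S → A → ℝ) (γ τ : ℝ) : S → ℝ :=
  fun s => ∑' t : ℕ, γ ^ t *
    ∑ s', stateDist P π (fun s'' => if s'' = s then 1 else 0) t s' *
      ∑ a, π s' a * (c s' a + τ * Real.log (π s' a))

/-- The entropy-regularized Q-value function `Q^π_{τ,s,a}` (including the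
`τ log π(a₀|s₀)` term at time 0). -/
def valueQreg {S A : Type*} [Fintype S] [Fintype A] [DecidableEq S]
    (P : S → A → S → ℝ) (π : S → A → ℝ) (c : S → A → ℝ) (γ τ : ℝ) : S → A → ℝ :=
  fun s a => c s a + τ * Real.log (π s a) + γ * ∑ s', P s a s' * valueVreg P π c γ τ s'

set_option linter.unusedSectionVars false

section aux
variable {S A : Type*} [Fintype S] [Fintype A] [DecidableEq S]
variable (P : S → A → S → ℝ) (π : S → A → ℝ)

lemma stepDist_sum (hP1 : ∀ s a, ∑ s', P s a s' = 1) (hπ1 : ∀ s, ∑ a, π s a = 1)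
    (μ : S → ℝ) : ∑ s', stepDist P π μ s' = ∑ s, μ s := by
  simp only [stepDist]
  rw [Finset.sum_comm]
  refine Finset.sum_congr rfl fun s _ => ?_
  rw [Finset.sum_comm]
  calc ∑ a, ∑ s', μ s * π s a * P s a s'
      = ∑ a, μ s * π s a * ∑ s', P s a s' := by
        refine Finset.sum_congr rfl fun a _ => ?_; rw [Finset.mul_sum]
    _ = ∑ a, μ s * π s a := by simp [hP1]
    _ = μ s := by rw [← Finset.mul_sum, hπ1, mul_one]

lemma stepDist_nonneg (hP0 : ∀ s a s', 0 ≤ P s a s') (hπ0 : ∀ s a, 0 ≤ π s a)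
    (μ : S → ℝ) (hμ : ∀ s, 0 ≤ μ s) : ∀ s', 0 ≤ stepDist P π μ s' := by
  intro s'
  refine Finset.sum_nonneg fun s _ => Finset.sum_nonneg fun a _ => ?_
  exact mul_nonneg (mul_nonneg (hμ s) (hπ0 s a)) (hP0 s a s')

lemma stateDist_nonneg (hP0 : ∀ s a s', 0 ≤ P s a s') (hπ0 : ∀ s a, 0 ≤ π s a)
    (ρ : S → ℝ) (hρ : ∀ s, 0 ≤ ρ s) : ∀ t s, 0 ≤ stateDist P π ρ t s := by
  intro t
  induction t with
  | zero => exact hρ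
  | succ t ih => exact stepDist_nonneg P π hP0 hπ0 _ ih

lemma stateDist_sum (hP1 : ∀ s a, ∑ s', P s a s' = 1) (hπ1 : ∀ s, ∑ a, π s a = 1)
    (ρ : S → ℝ) (hρ1 : ∑ s, ρ s = 1) : ∀ t, ∑ s, stateDist P π ρ t s = 1 := by
  intro t
  induction t with
  | zero => exact hρ1
  | succ t ih => rw [stateDist, stepDist_sum P π hP1 hπ1, ih]

lemma stepDist_delta (s0 s' : S) :
    stepDist P π (fun s'' => if s'' = s0 then 1 else 0) s' = ∑ a, π s0 a * P s0 a s' := by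
  simp only [stepDist]
  rw [Finset.sum_eq_single s0]
  · simp
  · intro b _ hb; simp [hb]
  · simp

lemma stepDist_linear (μ : S → ℝ) (s' : S) :
    stepDist P π μ s' = ∑ s0, μ s0 * stepDist P π (fun s'' => if s'' = s0 then 1 else 0) s' := by
  simp only [stepDist_delta]
  simp only [stepDist, Finset.mul_sum]
  refine Finset.sum_congr rfl fun s0 _ => Finset.sum_congr rfl fun a _ => ?_
  ring

lemma sum_sum_comm3 {α β ι : Type*} [Fintype α] [Fintype β] [Fintype ι]
    (f : α → β → ι → ℝ) :
    ∑ x, ∑ y, ∑ i, f x y i = ∑ i, ∑ x, ∑ y, f x y i :=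
  calc ∑ x, ∑ y, ∑ i, f x y i = ∑ x, ∑ i, ∑ y, f x y i :=
        Finset.sum_congr rfl fun x _ => Finset.sum_comm
    _ = ∑ i, ∑ x, ∑ y, f x y i := Finset.sum_comm

lemma stateDist_linear (ρ : S → ℝ) : ∀ t s',
    stateDist P π ρ t s' = ∑ s0, ρ s0 * stateDist P π (fun s'' => if s'' = s0 then 1 else 0) t s' := by
  intro t
  induction t with
  | zero =>
    intro s'
    simp only [stateDist]
    rw [Finset.sum_eq_single s']
    · simp
    · intro b _ hb; simp [Ne.symm hb]
    · simp
  | succ t ih =>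
    intro s'
    simp only [stateDist, stepDist]
    calc ∑ s, ∑ a, stateDist P π ρ t s * π s a * P s a s'
        = ∑ s, ∑ a, (∑ s0, ρ s0 * stateDist P π (fun s'' => if s'' = s0 then 1 else 0) t s) * π s a * P s a s' := by
          refine Finset.sum_congr rfl fun s _ => Finset.sum_congr rfl fun a _ => ?_
          rw [ih s]
      _ = ∑ s, ∑ a, ∑ s0, ρ s0 * stateDist P π (fun s'' => if s'' = s0 then 1 else 0) t s * π s a * P s a s' := by
          simp only [Finset.sum_mul]
      _ = ∑ s0, ∑ s, ∑ a, ρ s0 * stateDist P π (fun s'' => if s'' = s0 then 1 else 0) t s * π s a * P s a s' :=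
          sum_sum_comm3 _
      _ = ∑ s0, ρ s0 * ∑ s, ∑ a, stateDist P π (fun s'' => if s'' = s0 then 1 else 0) t s * π s a * P s a s' := by
          simp only [Finset.mul_sum]
          refine Finset.sum_congr rfl fun s0 _ => Finset.sum_congr rfl fun s _ =>
            Finset.sum_congr rfl fun a _ => ?_
          ring

lemma stateDist_shift (ρ : S → ℝ) : ∀ t,
    stateDist P π ρ (t + 1) = stateDist P π (stepDist P π ρ) t := by
  intro t
  induction t with
  | zero => rfl
  | succ t ih => show stepDist P π (stateDist P π ρ (t+1)) = _; rw [ih]; rfl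

lemma prob_inner_bound (μ f : S → ℝ) (hμ0 : ∀ s, 0 ≤ μ s) (hμ1 : ∑ s, μ s = 1) :
    |∑ s, μ s * f s| ≤ ∑ s, |f s| := by
  calc |∑ s, μ s * f s| ≤ ∑ s, |μ s * f s| := Finset.abs_sum_le_sum_abs _ _
    _ = ∑ s, μ s * |f s| := by
        refine Finset.sum_congr rfl fun s _ => ?_
        rw [abs_mul, abs_of_nonneg (hμ0 s)]
    _ ≤ ∑ s, 1 * |f s| := by
        refine Finset.sum_le_sum fun s _ => ?_
        refine mul_le_mul_of_nonneg_right ?_ (abs_nonneg _)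
        rw [← hμ1]
        exact Finset.single_le_sum (fun i _ => hμ0 i) (Finset.mem_univ s)
    _ = ∑ s, |f s| := by simp

lemma summable_geom_bound {γ : ℝ} (hγ0 : 0 ≤ γ) (hγ1 : γ < 1) (C : ℝ) (g : ℕ → ℝ)
    (hg : ∀ t, |g t| ≤ C) : Summable (fun t => γ ^ t * g t) := by
  refine Summable.of_norm_bounded
    ((summable_geometric_of_lt_one hγ0 hγ1).mul_left C) fun t => ?_
  rw [Real.norm_eq_abs, abs_mul, abs_pow, abs_of_nonneg hγ0, mul_comm]
  exact mul_le_mul_of_nonneg_right (hg t) (pow_nonneg hγ0 t)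

/-- Summability of the series defining expected values along trajectories. -/
lemma summable_traj {γ : ℝ} (hγ0 : 0 ≤ γ) (hγ1 : γ < 1)
    (hP0 : ∀ s a s', 0 ≤ P s a s') (hP1 : ∀ s a, ∑ s', P s a s' = 1)
    (hπ0 : ∀ s a, 0 ≤ π s a) (hπ1 : ∀ s, ∑ a, π s a = 1)
    (ρ : S → ℝ) (hρ0 : ∀ s, 0 ≤ ρ s) (hρ1 : ∑ s, ρ s = 1) (f : S → ℝ) :
    Summable (fun t => γ ^ t * ∑ s', stateDist P π ρ t s' * f s') :=
  summable_geom_bound hγ0 hγ1 (∑ s, |f s|) _ fun t =>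
    prob_inner_bound _ f (stateDist_nonneg P π hP0 hπ0 ρ hρ0 t)
      (stateDist_sum P π hP1 hπ1 ρ hρ1 t)

lemma delta_nonneg (s0 : S) : ∀ s : S, (0:ℝ) ≤ if s = s0 then 1 else 0 := by
  intro s; split <;> norm_num

lemma delta_sum (s0 : S) : ∑ s : S, (if s = s0 then (1:ℝ) else 0) = 1 := by
  simp

lemma sum_valueVreg (c : S → A → ℝ) {γ : ℝ} (τ : ℝ) (hγ0 : 0 ≤ γ) (hγ1 : γ < 1)
    (hP0 : ∀ s a s', 0 ≤ P s a s') (hP1 : ∀ s a, ∑ s', P s a s' = 1)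
    (hπ0 : ∀ s a, 0 ≤ π s a) (hπ1 : ∀ s, ∑ a, π s a = 1) (ρ : S → ℝ) :
    ∑ s, ρ s * valueVreg P π c γ τ s
      = ∑' t : ℕ, γ ^ t * ∑ s', stateDist P π ρ t s' *
          ∑ a, π s' a * (c s' a + τ * Real.log (π s' a)) := by
  set f : S → ℝ := fun s' => ∑ a, π s' a * (c s' a + τ * Real.log (π s' a)) with hf
  have hsum : ∀ s0 : S, Summable (fun t => γ ^ t *
      ∑ s', stateDist P π (fun s'' => if s'' = s0 then 1 else 0) t s' * f s') := fun s0 =>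
    summable_traj P π hγ0 hγ1 hP0 hP1 hπ0 hπ1 _ (delta_nonneg s0) (delta_sum s0) f
  rw [eq_comm]
  calc ∑' t : ℕ, γ ^ t * ∑ s', stateDist P π ρ t s' * f s'
      = ∑' t : ℕ, ∑ s0, ρ s0 * (γ ^ t *
          ∑ s', stateDist P π (fun s'' => if s'' = s0 then 1 else 0) t s' * f s') := by
        refine tsum_congr fun t => ?_
        have : ∑ s', stateDist P π ρ t s' * f s'
            = ∑ s0, ρ s0 * ∑ s', stateDist P π (fun s'' => if s'' = s0 then 1 else 0) t s' * f s' := by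
          calc ∑ s', stateDist P π ρ t s' * f s'
              = ∑ s', ∑ s0, ρ s0 * stateDist P π (fun s'' => if s'' = s0 then 1 else 0) t s' * f s' := by
                refine Finset.sum_congr rfl fun s' _ => ?_
                rw [stateDist_linear, Finset.sum_mul]
            _ = ∑ s0, ∑ s', ρ s0 * stateDist P π (fun s'' => if s'' = s0 then 1 else 0) t s' * f s' :=
                Finset.sum_comm
            _ = _ := by
                refine Finset.sum_congr rfl fun s0 _ => ?_
                rw [Finset.mul_sum]
                exact Finset.sum_congr rfl fun s' _ => by ring
        rw [this, Finset.mul_sum]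
        exact Finset.sum_congr rfl fun s0 _ => by ring
    _ = ∑ s0, ∑' t : ℕ, ρ s0 * (γ ^ t *
          ∑ s', stateDist P π (fun s'' => if s'' = s0 then 1 else 0) t s' * f s') :=
        Summable.tsum_finsetSum fun s0 _ => (hsum s0).mul_left (ρ s0)
    _ = ∑ s0, ρ s0 * valueVreg P π c γ τ s0 := by
        refine Finset.sum_congr rfl fun s0 _ => ?_
        rw [tsum_mul_left]
        rfl

lemma valueVreg_bellman (c : S → A → ℝ) {γ : ℝ} (τ : ℝ) (hγ0 : 0 ≤ γ) (hγ1 : γ < 1)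
    (hP0 : ∀ s a s', 0 ≤ P s a s') (hP1 : ∀ s a, ∑ s', P s a s' = 1)
    (hπ0 : ∀ s a, 0 ≤ π s a) (hπ1 : ∀ s, ∑ a, π s a = 1) (s : S) :
    valueVreg P π c γ τ s
      = (∑ a, π s a * (c s a + τ * Real.log (π s a)))
        + γ * ∑ s', (∑ a, π s a * P s a s') * valueVreg P π c γ τ s' := by
  set f : S → ℝ := fun s' => ∑ a, π s' a * (c s' a + τ * Real.log (π s' a)) with hf
  have hδ : ∀ s0 : S, Summable (fun t => γ ^ t *
      ∑ s', stateDist P π (fun s'' => if s'' = s0 then 1 else 0) t s' * f s') := fun s0 =>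
    summable_traj P π hγ0 hγ1 hP0 hP1 hπ0 hπ1 _ (delta_nonneg s0) (delta_sum s0) f
  have key : ∀ t : ℕ, ∑ s', stateDist P π (fun s'' => if s'' = s then 1 else 0) (t+1) s' * f s'
      = ∑ s0, (∑ a, π s a * P s a s0) *
          ∑ s', stateDist P π (fun s'' => if s'' = s0 then 1 else 0) t s' * f s' := by
    intro t
    calc ∑ s', stateDist P π (fun s'' => if s'' = s then 1 else 0) (t+1) s' * f s'
        = ∑ s', stateDist P π (stepDist P π (fun s'' => if s'' = s then 1 else 0)) t s' * f s' := by
          rw [stateDist_shift]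
      _ = ∑ s', (∑ s0, stepDist P π (fun s'' => if s'' = s then 1 else 0) s0 *
            stateDist P π (fun s'' => if s'' = s0 then 1 else 0) t s') * f s' := by
          refine Finset.sum_congr rfl fun s' _ => ?_
          rw [stateDist_linear]
      _ = ∑ s0, ∑ s', stepDist P π (fun s'' => if s'' = s then 1 else 0) s0 *
            stateDist P π (fun s'' => if s'' = s0 then 1 else 0) t s' * f s' := by
          rw [← Finset.sum_comm]
          exact Finset.sum_congr rfl fun s' _ => Finset.sum_mul _ _ _
      _ = ∑ s0, (∑ a, π s a * P s a s0) *
            ∑ s', stateDist P π (fun s'' => if s'' = s0 then 1 else 0) t s' * f s' := by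
          refine Finset.sum_congr rfl fun s0 _ => ?_
          rw [stepDist_delta, Finset.mul_sum]
          exact Finset.sum_congr rfl fun s' _ => by ring
  show (∑' t : ℕ, γ ^ t * ∑ s', stateDist P π (fun s'' => if s'' = s then 1 else 0) t s' * f s') = _
  rw [Summable.tsum_eq_zero_add (hδ s)]
  congr 1
  · simp only [stateDist, pow_zero, one_mul]
    rw [Finset.sum_eq_single s]
    · simp; rfl
    · intro b _ hb; simp [hb]
    · simp
  · calc ∑' t : ℕ, γ ^ (t+1) * ∑ s', stateDist P π (fun s'' => if s'' = s then 1 else 0) (t+1) s' * f s'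
        = ∑' t : ℕ, ∑ s0, γ * ((∑ a, π s a * P s a s0) * (γ ^ t *
            ∑ s', stateDist P π (fun s'' => if s'' = s0 then 1 else 0) t s' * f s')) := by
          refine tsum_congr fun t => ?_
          rw [key t, Finset.mul_sum]
          refine Finset.sum_congr rfl fun s0 _ => ?_
          rw [pow_succ]
          ring
      _ = ∑ s0, ∑' t : ℕ, γ * ((∑ a, π s a * P s a s0) * (γ ^ t *
            ∑ s', stateDist P π (fun s'' => if s'' = s0 then 1 else 0) t s' * f s')) :=
          Summable.tsum_finsetSum fun s0 _ => (((hδ s0).mul_left _).mul_left γ)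
      _ = γ * ∑ s0, (∑ a, π s a * P s a s0) * valueVreg P π c γ τ s0 := by
          rw [Finset.mul_sum]
          refine Finset.sum_congr rfl fun s0 _ => ?_
          rw [tsum_mul_left, tsum_mul_left]
          rfl

lemma tsum_telescope_neg {u : ℕ → ℝ} (h : Summable (fun t => u (t + 1) - u t))
    (h0 : Filter.Tendsto u Filter.atTop (nhds 0)) :
    ∑' t, (u (t + 1) - u t) = -u 0 := by
  have hs := h.hasSum
  have h1 := hs.tendsto_sum_nat
  have key : ∀ n, ∑ t ∈ Finset.range n, (u (t + 1) - u t) = u n - u 0 :=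
    fun n => Finset.sum_range_sub u n
  simp only [key] at h1
  have h2 : Filter.Tendsto (fun n => u n - u 0) Filter.atTop (nhds (0 - u 0)) :=
    h0.sub tendsto_const_nhds
  have := tendsto_nhds_unique h1 h2
  rw [this, zero_sub]

end aux

/-- Entropy-regularized performance difference lemma. For any two
(fully supported) policies `π, π̃`, regularization `τ > 0`, and initial distribution
`ρ`: `V^π_{τ,ρ} - V^π̃_{τ,ρ} = (1/(1-γ)) E_{s∼d^π_ρ}[⟨Q^π̃_{τ,s}, π_s - π̃_s⟩
+ τ D_KL(π_s ‖ π̃_s)]`. -/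
theorem regularized_performance_difference {S A : Type*} [Fintype S] [Fintype A]
    [DecidableEq S]
    (P : S → A → S → ℝ) (π πt : S → A → ℝ) (c : S → A → ℝ) (γ τ : ℝ) (ρ : S → ℝ)
    (hγ0 : 0 < γ) (hγ1 : γ < 1) (hτ : 0 < τ)
    (hP0 : ∀ s a s', 0 ≤ P s a s') (hP1 : ∀ s a, ∑ s', P s a s' = 1)
    (hπ0 : ∀ s a, 0 < π s a) (hπ1 : ∀ s, ∑ a, π s a = 1)
    (hπt0 : ∀ s a, 0 < πt s a) (hπt1 : ∀ s, ∑ a, πt s a = 1)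
    (hρ0 : ∀ s, 0 ≤ ρ s) (hρ1 : ∑ s, ρ s = 1) :
    (∑ s, ρ s * valueVreg P π c γ τ s) - (∑ s, ρ s * valueVreg P πt c γ τ s) =
      (1 / (1 - γ)) * ∑ s, visitation P π γ ρ s *
        ((∑ a, valueQreg P πt c γ τ s a * (π s a - πt s a)) +
          τ * ∑ a, π s a * Real.log (π s a / πt s a)) := by
  -- abbreviations
  set Vt : S → ℝ := valueVreg P πt c γ τ with hVt
  set cπ : S → ℝ := fun s => ∑ a, π s a * (c s a + τ * Real.log (π s a)) with hcπ
  set μ : ℕ → S → ℝ := stateDist P π ρ with hμ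
  have hπ0' : ∀ s a, 0 ≤ π s a := fun s a => (hπ0 s a).le
  have hπt0' : ∀ s a, 0 ≤ πt s a := fun s a => (hπt0 s a).le
  have hγ0' : (0:ℝ) ≤ γ := hγ0.le
  have hμ0 : ∀ t s, 0 ≤ μ t s := fun t s => stateDist_nonneg P π hP0 hπ0' ρ hρ0 t s
  have hμ1 : ∀ t, ∑ s, μ t s = 1 := stateDist_sum P π hP1 hπ1 ρ hρ1
  -- the bracket identity
  have hswap : ∀ (q : S → A → ℝ) (s : S),
      ∑ s', (∑ a, q s a * P s a s') * Vt s' = ∑ a, q s a * ∑ s', P s a s' * Vt s' := by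
    intro q s
    calc ∑ s', (∑ a, q s a * P s a s') * Vt s'
        = ∑ s', ∑ a, q s a * (P s a s' * Vt s') := by
          refine Finset.sum_congr rfl fun s' _ => ?_
          rw [Finset.sum_mul]
          exact Finset.sum_congr rfl fun a _ => by ring
      _ = ∑ a, ∑ s', q s a * (P s a s' * Vt s') := Finset.sum_comm
      _ = ∑ a, q s a * ∑ s', P s a s' * Vt s' := by
          refine Finset.sum_congr rfl fun a _ => ?_
          rw [Finset.mul_sum]
  have hB : ∀ s, (∑ a, valueQreg P πt c γ τ s a * (π s a - πt s a)) +
        τ * ∑ a, π s a * Real.log (π s a / πt s a)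
      = cπ s + γ * ∑ s', (∑ a, π s a * P s a s') * Vt s' - Vt s := by
    intro s
    have hbell := valueVreg_bellman P πt c τ hγ0' hγ1 hP0 hP1 hπt0' hπt1 s
    simp only [← hVt] at hbell
    have hlog : ∀ a, Real.log (π s a / πt s a) = Real.log (π s a) - Real.log (πt s a) :=
      fun a => Real.log_div (hπ0 s a).ne' (hπt0 s a).ne'
    simp only [valueQreg, hlog, ← hVt]
    rw [hbell, hswap π s, hswap πt s, hcπ]
    rw [show τ * ∑ a, π s a * (Real.log (π s a) - Real.log (πt s a))
        = ∑ a, τ * (π s a * (Real.log (π s a) - Real.log (πt s a))) from Finset.mul_sum _ _ _]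
    rw [show γ * ∑ a, π s a * ∑ s', P s a s' * Vt s'
        = ∑ a, γ * (π s a * ∑ s', P s a s' * Vt s') from Finset.mul_sum _ _ _]
    rw [show γ * ∑ a, πt s a * ∑ s', P s a s' * Vt s'
        = ∑ a, γ * (πt s a * ∑ s', P s a s' * Vt s') from Finset.mul_sum _ _ _]
    rw [← Finset.sum_add_distrib, ← Finset.sum_add_distrib, ← Finset.sum_add_distrib,
      ← Finset.sum_sub_distrib]
    refine Finset.sum_congr rfl fun a _ => ?_
    ring
  -- step identity
  have hstep : ∀ t, ∑ s, μ t s * ∑ s', (∑ a, π s a * P s a s') * Vt s'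
      = ∑ s', μ (t + 1) s' * Vt s' := by
    intro t
    calc ∑ s, μ t s * ∑ s', (∑ a, π s a * P s a s') * Vt s'
        = ∑ s, ∑ s', ∑ a, μ t s * π s a * P s a s' * Vt s' := by
          refine Finset.sum_congr rfl fun s _ => ?_
          rw [Finset.mul_sum]
          refine Finset.sum_congr rfl fun s' _ => ?_
          rw [Finset.sum_mul, Finset.mul_sum]
          exact Finset.sum_congr rfl fun a _ => by ring
      _ = ∑ s', ∑ s, ∑ a, μ t s * π s a * P s a s' * Vt s' := Finset.sum_comm
      _ = ∑ s', (∑ s, ∑ a, μ t s * π s a * P s a s') * Vt s' := by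
          refine Finset.sum_congr rfl fun s' _ => ?_
          rw [Finset.sum_mul]
          exact Finset.sum_congr rfl fun s _ => (Finset.sum_mul _ _ _).symm
      _ = ∑ s', μ (t + 1) s' * Vt s' := by
          refine Finset.sum_congr rfl fun s' _ => ?_
          rw [hμ]
          rfl
  -- series pieces
  have hg : Summable (fun t => γ ^ t * ∑ s, μ t s * cπ s) :=
    summable_traj P π hγ0' hγ1 hP0 hP1 hπ0' hπ1 ρ hρ0 hρ1 cπ
  set u : ℕ → ℝ := fun t => γ ^ t * ∑ s, μ t s * Vt s with hu
  set CV : ℝ := ∑ s, |Vt s| with hCV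
  have hubd : ∀ t, |∑ s, μ t s * Vt s| ≤ CV := fun t =>
    prob_inner_bound _ _ (hμ0 t) (hμ1 t)
  have hu0 : Filter.Tendsto u Filter.atTop (nhds 0) := by
    have h1 : ∀ t, ‖u t‖ ≤ γ ^ t * CV := by
      intro t
      rw [hu]
      simp only [Real.norm_eq_abs, abs_mul, abs_pow, abs_of_nonneg hγ0']
      exact mul_le_mul_of_nonneg_left (hubd t) (pow_nonneg hγ0' t)
    have h2 : Filter.Tendsto (fun t : ℕ => γ ^ t * CV) Filter.atTop (nhds 0) := by
      have := tendsto_pow_atTop_nhds_zero_of_lt_one hγ0' hγ1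
      simpa using this.mul_const CV
    exact squeeze_zero_norm h1 h2
  have hdsum : Summable (fun t => u (t + 1) - u t) := by
    have heq : ∀ t, u (t + 1) - u t
        = γ ^ t * (γ * ∑ s, μ (t + 1) s * Vt s - ∑ s, μ t s * Vt s) := by
      intro t
      rw [hu]
      simp only [pow_succ]
      ring
    have : Summable (fun t => γ ^ t * (γ * ∑ s, μ (t + 1) s * Vt s - ∑ s, μ t s * Vt s)) := by
      refine summable_geom_bound hγ0' hγ1 (γ * CV + CV) _ fun t => ?_
      calc |γ * ∑ s, μ (t + 1) s * Vt s - ∑ s, μ t s * Vt s|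
          ≤ |γ * ∑ s, μ (t + 1) s * Vt s| + |∑ s, μ t s * Vt s| := abs_sub _ _
        _ ≤ γ * CV + CV := by
            refine add_le_add ?_ (hubd t)
            rw [abs_mul, abs_of_nonneg hγ0']
            exact mul_le_mul_of_nonneg_left (hubd (t + 1)) hγ0'
    exact this.congr fun t => (heq t).symm
  have htel : ∑' t, (u (t + 1) - u t) = -u 0 := tsum_telescope_neg hdsum hu0
  have hu0eq : u 0 = ∑ s, ρ s * Vt s := by
    rw [hu]; simp [hμ, stateDist]
  -- main computation: rewrite the visitation sum
  have hBsum : ∀ s, Summable (fun t => γ ^ t * μ t s *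
      ((∑ a, valueQreg P πt c γ τ s a * (π s a - πt s a)) +
        τ * ∑ a, π s a * Real.log (π s a / πt s a))) := by
    intro s
    set B := (∑ a, valueQreg P πt c γ τ s a * (π s a - πt s a)) +
        τ * ∑ a, π s a * Real.log (π s a / πt s a) with hBdef
    have : ∀ t, γ ^ t * μ t s * B = γ ^ t * (μ t s * B) := fun t => mul_assoc _ _ _
    refine Summable.congr ?_ fun t => (this t).symm
    refine summable_geom_bound hγ0' hγ1 |B| _ fun t => ?_
    rw [abs_mul, abs_of_nonneg (hμ0 t s)]
    have : μ t s ≤ 1 := by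
      rw [← hμ1 t]
      exact Finset.single_le_sum (fun i _ => hμ0 t i) (Finset.mem_univ s)
    nlinarith [abs_nonneg B]
  have hμsummable : ∀ s, Summable (fun t => γ ^ t * μ t s) := by
    intro s
    refine summable_geom_bound hγ0' hγ1 1 _ fun t => ?_
    rw [abs_of_nonneg (hμ0 t s)]
    rw [← hμ1 t]
    exact Finset.single_le_sum (fun i _ => hμ0 t i) (Finset.mem_univ s)
  have hvis : ∑ s, visitation P π γ ρ s *
        ((∑ a, valueQreg P πt c γ τ s a * (π s a - πt s a)) +
          τ * ∑ a, π s a * Real.log (π s a / πt s a))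
      = (1 - γ) * ∑' t, γ ^ t * ∑ s, μ t s *
        ((∑ a, valueQreg P πt c γ τ s a * (π s a - πt s a)) +
          τ * ∑ a, π s a * Real.log (π s a / πt s a)) := by
    calc ∑ s, visitation P π γ ρ s * _
        = ∑ s, (1 - γ) * ∑' t, γ ^ t * μ t s *
            ((∑ a, valueQreg P πt c γ τ s a * (π s a - πt s a)) +
              τ * ∑ a, π s a * Real.log (π s a / πt s a)) := by
          refine Finset.sum_congr rfl fun s _ => ?_
          rw [visitation, mul_assoc, ← tsum_mul_right]
      _ = (1 - γ) * ∑ s, ∑' t, γ ^ t * μ t s *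
            ((∑ a, valueQreg P πt c γ τ s a * (π s a - πt s a)) +
              τ * ∑ a, π s a * Real.log (π s a / πt s a)) := by
          rw [Finset.mul_sum]
      _ = (1 - γ) * ∑' t, ∑ s, γ ^ t * μ t s *
            ((∑ a, valueQreg P πt c γ τ s a * (π s a - πt s a)) +
              τ * ∑ a, π s a * Real.log (π s a / πt s a)) := by
          rw [Summable.tsum_finsetSum fun s _ => hBsum s]
      _ = (1 - γ) * ∑' t, γ ^ t * ∑ s, μ t s *
            ((∑ a, valueQreg P πt c γ τ s a * (π s a - πt s a)) +
              τ * ∑ a, π s a * Real.log (π s a / πt s a)) := by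
          congr 1
          refine tsum_congr fun t => ?_
          rw [Finset.mul_sum]
          exact Finset.sum_congr rfl fun s _ => (mul_assoc _ _ _)
  -- identify the inner term
  have hinner : ∀ t, γ ^ t * ∑ s, μ t s *
        ((∑ a, valueQreg P πt c γ τ s a * (π s a - πt s a)) +
          τ * ∑ a, π s a * Real.log (π s a / πt s a))
      = γ ^ t * ∑ s, μ t s * cπ s + (u (t + 1) - u t) := by
    intro t
    have h1 : ∑ s, μ t s *
        ((∑ a, valueQreg P πt c γ τ s a * (π s a - πt s a)) +
          τ * ∑ a, π s a * Real.log (π s a / πt s a))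
        = ∑ s, μ t s * (cπ s + γ * ∑ s', (∑ a, π s a * P s a s') * Vt s' - Vt s) := by
      refine Finset.sum_congr rfl fun s _ => ?_
      rw [hB s]
    rw [h1]
    have h2 : ∑ s, μ t s * (cπ s + γ * ∑ s', (∑ a, π s a * P s a s') * Vt s' - Vt s)
        = ∑ s, μ t s * cπ s + γ * (∑ s, μ t s * ∑ s', (∑ a, π s a * P s a s') * Vt s')
          - ∑ s, μ t s * Vt s := by
      rw [show γ * (∑ s, μ t s * ∑ s', (∑ a, π s a * P s a s') * Vt s')
          = ∑ s, γ * (μ t s * ∑ s', (∑ a, π s a * P s a s') * Vt s') from Finset.mul_sum _ _ _,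
        ← Finset.sum_add_distrib, ← Finset.sum_sub_distrib]
      refine Finset.sum_congr rfl fun s _ => ?_
      ring
    rw [h2, hstep t]
    simp only [hu]
    ring
  -- the value series
  have hval : ∑ s, ρ s * valueVreg P π c γ τ s = ∑' t, γ ^ t * ∑ s, μ t s * cπ s := by
    rw [sum_valueVreg P π c τ hγ0' hγ1 hP0 hP1 hπ0' hπ1 ρ]
  -- put it together
  rw [hvis]
  have hfinal : ∑' t, γ ^ t * ∑ s, μ t s *
        ((∑ a, valueQreg P πt c γ τ s a * (π s a - πt s a)) +
          τ * ∑ a, π s a * Real.log (π s a / πt s a))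
      = ∑ s, ρ s * valueVreg P π c γ τ s - ∑ s, ρ s * Vt s := by
    calc ∑' t, γ ^ t * ∑ s, μ t s *
          ((∑ a, valueQreg P πt c γ τ s a * (π s a - πt s a)) +
            τ * ∑ a, π s a * Real.log (π s a / πt s a))
        = ∑' t, (γ ^ t * ∑ s, μ t s * cπ s + (u (t + 1) - u t)) := tsum_congr hinner
      _ = (∑' t, γ ^ t * ∑ s, μ t s * cπ s) + ∑' t, (u (t + 1) - u t) := Summable.tsum_add hg hdsum
      _ = ∑ s, ρ s * valueVreg P π c γ τ s - ∑ s, ρ s * Vt s := by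
          rw [htel, hu0eq, hval]
          ring
  rw [hfinal]
  have hne : (1:ℝ) - γ ≠ 0 := by linarith
  field_simp
end
end
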